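/- arXiv:2405.14721 — 2 statements merged into one kernel-verified Lean document; each statement's English description precedes it below -/
import Mathlib

section
/- Assume z̄ η₀ < 1. Then for each i ∈ K, the sequence of fitness distributions (p_{kn+i})_{n≥0} converges as n → ∞ in total variation on all of [0, η₀] to the probability measure π_i(dx) = Σ_{j=0}^{k−1} (z_{[i−1]} ⋯ z_{[i−j]} / (1 − (z̄ x)^k)) x^j β_{[i−j]} q_{[i−j]}(dx) (the product z_{[i−1]} ⋯ z_{[i−j]} is over 1 ≤ ℓ ≤ j of z_{[i−ℓ]}, equal to 1 when j = 0); in particular no atom appears at η₀. -/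
open MeasureTheory Matrix Filter
open Fin.NatCast

noncomputable section

/-- The maximum of the support (within `[0,1]`) of a measure `μ` on `ℝ`:
`sup {x ∈ [0,1] : μ([x,1]) > 0}`. -/
def etaSup (μ : Measure ℝ) : ℝ :=
  sSup {x | x ∈ Set.Icc (0:ℝ) 1 ∧ 0 < μ (Set.Icc x 1)}

/-- Membership in `I_μ`: `z ≥ 0` and `∑_{n≥0} z^n ∫ x^n β_j q_j(dx) < ∞` for every `j`. -/
def memIm (k : ℕ) (β : Fin k → ℝ) (q : Fin k → Measure ℝ) (z : ℝ) : Prop :=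
  0 ≤ z ∧ ∀ j : Fin k,
    (∑' n : ℕ, ENNReal.ofReal (z ^ n) * ∫⁻ x, ENNReal.ofReal (x ^ n * β j) ∂(q j)) < ⊤

/-- The matrix `A(z)` with entries `A(z)_{i,j} = μ_j^{[i−j]}(z)`, where
`μ_j^i(z) = ∫ (zx)^i / (1 − (zx)^k) β_j q_j(dx)`. -/
def Amat (k : ℕ) (β : Fin k → ℝ) (q : Fin k → Measure ℝ) (z : ℝ) :
    Matrix (Fin k) (Fin k) ℝ :=
  Matrix.of fun i j =>
    ∫ x, (z * x) ^ (((i - j : Fin k) : ℕ)) / (1 - (z * x) ^ k) * β j ∂(q j)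

/-- `ρ_j(z) = ∫ β_j q_j(dx) / (1 − z x)`. -/
def rhoFun (k : ℕ) (β : Fin k → ℝ) (q : Fin k → Measure ℝ) (z : ℝ) (j : Fin k) : ℝ :=
  ∫ x, β j / (1 - z * x) ∂(q j)

/-- Convergence in total variation on a set `s ⊆ ℝ`: for all `ε > 0`, eventually
`|p_n(A) − π(A)| < ε` uniformly over measurable subsets `A ⊆ s`. -/
def TVConvOn (p : ℕ → Measure ℝ) (π : Measure ℝ) (s : Set ℝ) : Prop :=
  ∀ ε : ℝ, 0 < ε → ∃ N : ℕ, ∀ n ≥ N, ∀ A : Set ℝ, MeasurableSet A → A ⊆ s →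
    |((p n) A).toReal - (π A).toReal| < ε

/-- Weak convergence of measures (supported in a compact interval): convergence of integrals of
continuous test functions. -/
def WeakConv (p : ℕ → Measure ℝ) (π : Measure ℝ) : Prop :=
  ∀ f : ℝ → ℝ, Continuous f →
    Tendsto (fun n => ∫ x, f x ∂(p n)) atTop (nhds (∫ x, f x ∂π))

/-- Kingman's periodic recursion:
`p_{n+1}(dx) = β_{[n+1]} q_{[n+1]}(dx) + (1 − β_{[n+1]}) x p_n(dx) / w_n`,
where `w n = ∫ x p_n(dx)`. -/
def KingmanRec (k : ℕ) [NeZero k] (β : Fin k → ℝ) (q : Fin k → Measure ℝ)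
    (p : ℕ → Measure ℝ) (w : ℕ → ℝ) : Prop :=
  (∀ n, w n = ∫ x, x ∂(p n)) ∧
  ∀ n : ℕ, p (n + 1) = ENNReal.ofReal (β ((n + 1 : ℕ) : Fin k)) • q ((n + 1 : ℕ) : Fin k)
    + (p n).withDensity fun x => ENNReal.ofReal ((1 - β ((n + 1 : ℕ) : Fin k)) * x / w n)

/-- The absolutely continuous part of the limiting fitness distribution:
`Σ_{j=0}^{k−1} (z_{[i−1]} ⋯ z_{[i−j]} / (1 − (z̄ x)^k)) x^j β_{[i−j]} q_{[i−j]}(dx)`. -/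
def nuMeas (k : ℕ) [NeZero k] (β : Fin k → ℝ) (q : Fin k → Measure ℝ)
    (zf : Fin k → ℝ) (zbar : ℝ) (i : Fin k) : Measure ℝ :=
  ∑ j ∈ Finset.range k,
    (q (i - (j : Fin k))).withDensity fun x =>
      ENNReal.ofReal ((∏ ℓ ∈ Finset.range j, zf (i - ((ℓ + 1 : ℕ) : Fin k)))
        / (1 - (zbar * x) ^ k) * x ^ j * β (i - (j : Fin k)))

/-!
Unrolling the recursion gives `p_N = Σ_{j<N} c_{N,j} x^j β q + c_{N,N} x^N p₀`, where `c_{N,j}` is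
the product of the `j` growth factors `(1 - β_{[m+1]}) / w_m` preceding `N`. Along `N = kn + i`
these products converge to `z_{[i-1]} ⋯ z_{[i-j]}`, and since the `k`-periodic `z`'s have geometric
mean `z̄`, they are bounded by `D ζ^j` uniformly in `N` for any `ζ > z̄`. Expanding
`1 / (1 - (z̄x)^k)` as a geometric series writes `π_i(A)` as the same series with the limiting
coefficients. Taking `ζ η₀ < 1`, dominated convergence bounds `|p_{kn+i}(A) - π_i(A)|` uniformly in
`A ⊆ [0, η₀]` by a quantity tending to `0`; the remainder `c_{N,N} x^N p₀` is controlled by the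
same bound, which is why no atom forms at `η₀`. That `π_i` has mass one follows from the limit.
-/

open Set
open scoped ENNReal Topology

lemma etaSup_nonneg (μ : Measure ℝ) : 0 ≤ etaSup μ :=
  Real.sSup_nonneg fun _ hx => hx.1.1

lemma measure_Icc_eq_zero_of_etaSup_lt {μ : Measure ℝ} {y : ℝ} (hy : etaSup μ < y) :
    μ (Icc y 1) = 0 := by
  by_contra h
  rcases le_or_gt y 1 with hy1 | hy1
  · exact hy.not_ge <| le_csSup ⟨1, fun _ hx => hx.1.2⟩
      ⟨⟨(etaSup_nonneg μ).trans hy.le, hy1⟩, pos_iff_ne_zero.2 h⟩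
  · exact h (by simp [Icc_eq_empty_of_lt hy1])

lemma measure_compl_Icc_eq_zero_of_etaSup_le {μ : Measure ℝ} (hμ : μ (Icc 0 1)ᶜ = 0) {y : ℝ}
    (hy : etaSup μ ≤ y) : μ (Icc 0 y)ᶜ = 0 := by
  have hcover : (Icc 0 y)ᶜ ⊆ (Icc 0 1)ᶜ ∪ ⋃ n : ℕ, Icc (etaSup μ + 1 / (n + 1)) 1 := by
    intro x hx
    by_cases hx1 : x ∈ Icc (0:ℝ) 1
    · have hxy : etaSup μ < x := hy.trans_lt (by simp_all)
      obtain ⟨n, hn⟩ := exists_nat_one_div_lt (sub_pos.2 hxy)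
      exact Or.inr (mem_iUnion.2 ⟨n, by linarith, hx1.2⟩)
    · exact Or.inl hx1
  refine measure_mono_null hcover (measure_union_null hμ (measure_iUnion_null fun n => ?_))
  exact measure_Icc_eq_zero_of_etaSup_lt (lt_add_of_pos_right _ (by positivity))

lemma ae_mem_Icc {μ : Measure ℝ} {η : ℝ} (hμ : μ (Icc 0 η)ᶜ = 0) : ∀ᵐ x ∂μ, x ∈ Icc 0 η :=
  measure_eq_zero_iff_ae_notMem.1 hμ |>.mono fun _ hx => not_not.1 hx

lemma integrable_id_of_compl_Icc {μ : Measure ℝ} [IsFiniteMeasure μ] {η : ℝ}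
    (hμ : μ (Icc 0 η)ᶜ = 0) : Integrable (fun x => x) μ := by
  refine Integrable.mono' (integrable_const η) measurable_id.aestronglyMeasurable ?_
  filter_upwards [ae_mem_Icc hμ] with x hx
  rw [Real.norm_eq_abs, abs_of_nonneg hx.1]
  exact hx.2

lemma integral_id_pos_of_etaSup_pos {μ : Measure ℝ} [IsFiniteMeasure μ] (hμ : μ (Icc 0 1)ᶜ = 0)
    (h : 0 < etaSup μ) : 0 < ∫ x, x ∂μ := by
  obtain ⟨x₀, ⟨-, hμx₀⟩, hx₀pos⟩ := exists_lt_of_lt_csSup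
    (nonempty_iff_ne_empty.2 fun he => by
      rw [etaSup, he, Real.sSup_empty] at h; exact h.false) h
  rw [integral_pos_iff_support_of_nonneg_ae ((ae_mem_Icc hμ).mono fun _ hx => hx.1)
    (integrable_id_of_compl_Icc hμ)]
  exact hμx₀.trans_le (measure_mono fun x hx => (hx₀pos.trans_le hx.1).ne')

section KingmanStep

variable {ρ μ ν : Measure ℝ} {b w η : ℝ}

lemma lintegral_ofReal_id [IsFiniteMeasure μ] (hμ : μ (Icc 0 η)ᶜ = 0) :
    ∫⁻ x, ENNReal.ofReal x ∂μ = ENNReal.ofReal (∫ x, x ∂μ) :=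
  (ofReal_integral_eq_lintegral_ofReal (integrable_id_of_compl_Icc hμ)
    ((ae_mem_Icc hμ).mono fun _ hx => hx.1)).symm

lemma kingmanStep_spec [IsProbabilityMeasure ρ] [IsProbabilityMeasure μ] (hb : b ∈ Ioo 0 1)
    (hρ : ρ (Icc 0 η)ᶜ = 0) (hμ : μ (Icc 0 η)ᶜ = 0) (hw : w = ∫ x, x ∂μ) (hw0 : 0 < w)
    (hν : ν = ENNReal.ofReal b • ρ + μ.withDensity fun x => ENNReal.ofReal ((1 - b) * x / w)) :
    IsProbabilityMeasure ν ∧ ν (Icc 0 η)ᶜ = 0 ∧ b * ∫ x, x ∂ρ ≤ ∫ x, x ∂ν := by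
  have hc : 0 ≤ (1 - b) / w := div_nonneg (sub_nonneg.2 hb.2.le) hw0.le
  have hdensity : ∫⁻ x, ENNReal.ofReal ((1 - b) * x / w) ∂μ = ENNReal.ofReal (1 - b) := by
    simp_rw [mul_div_right_comm _ _ w, ENNReal.ofReal_mul hc]
    rw [lintegral_const_mul _ ENNReal.measurable_ofReal, lintegral_ofReal_id hμ, ← hw,
      ← ENNReal.ofReal_mul hc, div_mul_cancel₀ _ hw0.ne']
  have hprob : IsProbabilityMeasure ν := ⟨by
    rw [hν, Measure.add_apply, withDensity_apply _ MeasurableSet.univ, Measure.restrict_univ,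
      hdensity, Measure.smul_apply, measure_univ, smul_eq_mul, mul_one,
      ← ENNReal.ofReal_add hb.1.le (sub_nonneg.2 hb.2.le), add_sub_cancel, ENNReal.ofReal_one]⟩
  have hsupp : ν (Icc 0 η)ᶜ = 0 := by
    simp [hν, hρ, withDensity_absolutelyContinuous _ _ hμ]
  refine ⟨hprob, hsupp, (ENNReal.ofReal_le_ofReal_iff ?_).1 ?_⟩
  · exact integral_nonneg_of_ae ((ae_mem_Icc hsupp).mono fun _ hx => hx.1)
  rw [← lintegral_ofReal_id hsupp, ENNReal.ofReal_mul hb.1.le, ← lintegral_ofReal_id hρ, hν,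
    lintegral_add_measure, lintegral_smul_measure, smul_eq_mul]
  exact le_self_add

end KingmanStep

section KingmanRec

variable {k : ℕ} [NeZero k] {β : Fin k → ℝ} {q : Fin k → Measure ℝ} {p : ℕ → Measure ℝ}
  {w : ℕ → ℝ} {η : ℝ}

theorem KingmanRec.invariants [∀ i, IsProbabilityMeasure (q i)] (hrec : KingmanRec k β q p w)
    (hβ : ∀ i, β i ∈ Ioo 0 1) (hq : ∀ i, q i (Icc 0 η)ᶜ = 0) (hqpos : ∀ i, 0 < ∫ x, x ∂q i)
    (hp0 : IsProbabilityMeasure (p 0)) (hp0η : p 0 (Icc 0 η)ᶜ = 0) (hw0 : 0 < w 0) (n : ℕ) :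
    IsProbabilityMeasure (p n) ∧ p n (Icc 0 η)ᶜ = 0 ∧ 0 < w n := by
  induction n with
  | zero => exact ⟨hp0, hp0η, hw0⟩
  | succ n ih =>
    obtain ⟨hprob, hsupp, hpos⟩ := ih
    obtain ⟨hprob', hsupp', hlow⟩ :=
      kingmanStep_spec (hβ _) (hq _) hsupp (hrec.1 n) hpos (hrec.2 n)
    exact ⟨hprob', hsupp', (mul_pos (hβ _).1 (hqpos _)).trans_le (hrec.1 (n + 1) ▸ hlow)⟩

theorem KingmanRec.le_w_succ [∀ i, IsProbabilityMeasure (q i)] (hrec : KingmanRec k β q p w)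
    (hβ : ∀ i, β i ∈ Ioo 0 1) (hq : ∀ i, q i (Icc 0 η)ᶜ = 0) {n : ℕ}
    (hprob : IsProbabilityMeasure (p n)) (hsupp : p n (Icc 0 η)ᶜ = 0) (hpos : 0 < w n) :
    β ((n + 1 : ℕ) : Fin k) * ∫ x, x ∂q ((n + 1 : ℕ) : Fin k) ≤ w (n + 1) :=
  hrec.1 (n + 1) ▸ (kingmanStep_spec (hβ _) (hq _) hsupp (hrec.1 n) hpos (hrec.2 n)).2.2

end KingmanRec

section Periodic

variable {k : ℕ} [NeZero k] {M : Type*} [CommMonoid M]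

lemma Fin.natCast_mul_add (m j : ℕ) : ((k * m + j : ℕ) : Fin k) = j := by
  simp

lemma Fin.natCast_mul_add_val (r : Fin k) (n : ℕ) : ((k * n + r : ℕ) : Fin k) = r := by
  rw [Fin.natCast_mul_add, Fin.cast_val_eq_self]

lemma Fin.natCast_mul_add_sub (i : Fin k) {n ℓ : ℕ} (h : ℓ ≤ k * n + i) :
    ((k * n + i - ℓ : ℕ) : Fin k) = i - ℓ := by
  rw [show ((k * n + i - ℓ : ℕ) : Fin k) = ((k * n + i : ℕ) : Fin k) - ℓ from
    open Fin.CommRing in Nat.cast_sub h, Fin.natCast_mul_add_val]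

lemma prod_range_natCast_fin (f : Fin k → M) : ∏ ℓ ∈ Finset.range k, f ℓ = ∏ r, f r := by
  simp [← Fin.prod_univ_eq_prod_range (fun ℓ => f ℓ), Fin.cast_val_eq_self]

lemma prod_Ico_natCast_fin (f : Fin k → M) (a : ℕ) :
    ∏ m ∈ Finset.Ico a (a + k), f m = ∏ r, f r := by
  rw [Finset.prod_Ico_eq_prod_range, Nat.add_sub_cancel_left]
  simp only [Nat.cast_add]
  exact (prod_range_natCast_fin fun r => f ((a : Fin k) + r)).trans
    (Fintype.prod_equiv (Equiv.addLeft (a : Fin k)) _ f fun _ => rfl)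

end Periodic

section TrailingProd

def trailingProd (u : ℕ → ℝ) (N j : ℕ) : ℝ := ∏ ℓ ∈ Finset.range j, u (N - (ℓ + 1))

variable {u : ℕ → ℝ}

@[simp] lemma trailingProd_zero (u : ℕ → ℝ) (N : ℕ) : trailingProd u N 0 = 1 := by
  simp [trailingProd]

lemma trailingProd_succ_succ (u : ℕ → ℝ) (N j : ℕ) :
    trailingProd u (N + 1) (j + 1) = u N * trailingProd u N j := by
  simp [trailingProd, Finset.prod_range_succ', mul_comm]

lemma trailingProd_nonneg (hu : ∀ m, 0 ≤ u m) (N j : ℕ) : 0 ≤ trailingProd u N j :=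
  Finset.prod_nonneg fun _ _ => hu _

lemma trailingProd_eq_prod_Ico {N j : ℕ} (h : j ≤ N) :
    trailingProd u N j = ∏ m ∈ Finset.Ico (N - j) N, u m := by
  rw [Finset.prod_Ico_eq_prod_range, Nat.sub_sub_self h, trailingProd,
    ← Finset.prod_range_reflect]
  refine Finset.prod_congr rfl fun ℓ hℓ => congrArg u ?_
  have := Finset.mem_range.1 hℓ
  omega

end TrailingProd

lemma withDensity_finset_sum {α ι : Type*} [MeasurableSpace α] (s : Finset ι) (μ : ι → Measure α)
    (f : α → ℝ≥0∞) :
    (∑ i ∈ s, μ i).withDensity f = ∑ i ∈ s, (μ i).withDensity f := by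
  classical
  induction s using Finset.induction with
  | empty => simp [withDensity_zero_left]
  | insert _ _ hi ih => rw [Finset.sum_insert hi, Finset.sum_insert hi, withDensity_add_measure, ih]

lemma withDensity_pow_withDensity_const_mul (μ : Measure ℝ) (c : ℝ≥0∞) (j : ℕ) :
    (μ.withDensity fun x => ENNReal.ofReal x ^ j).withDensity (fun x => c * ENNReal.ofReal x)
      = c • μ.withDensity fun x => ENNReal.ofReal x ^ (j + 1) := by
  rw [← withDensity_mul _ (by fun_prop) (by fun_prop), ← withDensity_smul _ (by fun_prop)]
  congr 1
  ext x
  simp only [Pi.mul_apply, Pi.smul_apply, smul_eq_mul, pow_succ]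
  ring

section Unrolling

variable {k : ℕ} [NeZero k] {β : Fin k → ℝ} {q : Fin k → Measure ℝ} {p : ℕ → Measure ℝ}
  {w : ℕ → ℝ}

def growthFactor (β : Fin k → ℝ) (w : ℕ → ℝ) (m : ℕ) : ℝ :=
  (1 - β ((m + 1 : ℕ) : Fin k)) / w m

lemma growthFactor_nonneg (hβ : ∀ i, β i ∈ Ioo 0 1) (hw : ∀ n, 0 < w n) (m : ℕ) :
    0 ≤ growthFactor β w m :=
  div_nonneg (sub_nonneg.2 (hβ _).2.le) (hw m).le

theorem KingmanRec.eq_sum (hrec : KingmanRec k β q p w) (hu : ∀ m, 0 ≤ growthFactor β w m)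
    (N : ℕ) :
    p N = ∑ j ∈ Finset.range N,
        ENNReal.ofReal (trailingProd (growthFactor β w) N j * β ((N - j : ℕ) : Fin k)) •
          (q ((N - j : ℕ) : Fin k)).withDensity (fun x => ENNReal.ofReal x ^ j)
      + ENNReal.ofReal (trailingProd (growthFactor β w) N N) •
          (p 0).withDensity (fun x => ENNReal.ofReal x ^ N) := by
  induction N with
  | zero => simp
  | succ N ih =>
    have hdensity : (fun x => ENNReal.ofReal ((1 - β ((N + 1 : ℕ) : Fin k)) * x / w N))
        = fun x => ENNReal.ofReal (growthFactor β w N) * ENNReal.ofReal x := by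
      ext x
      rw [← ENNReal.ofReal_mul (hu N), growthFactor, mul_div_right_comm]
    rw [hrec.2 N, hdensity, ih, withDensity_add_measure, withDensity_finset_sum,
      Finset.sum_range_succ']
    simp only [withDensity_smul_measure, withDensity_pow_withDensity_const_mul, smul_smul,
      ← ENNReal.ofReal_mul' (hu N), mul_comm _ (growthFactor β w N), mul_assoc,
      trailingProd_succ_succ, Nat.succ_sub_succ, Nat.sub_zero, trailingProd_zero, one_mul,
      pow_zero, withDensity_const, one_smul]
    abel

theorem KingmanRec.apply_eq (hrec : KingmanRec k β q p w) (hu : ∀ m, 0 ≤ growthFactor β w m)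
    (i : Fin k) (n : ℕ) {A : Set ℝ} (hA : MeasurableSet A) :
    p (k * n + i) A = ∑ j ∈ Finset.range (k * n + i),
        ENNReal.ofReal (trailingProd (growthFactor β w) (k * n + i) j * β (i - j)) *
          ∫⁻ x in A, ENNReal.ofReal x ^ j ∂q (i - j)
      + ENNReal.ofReal (trailingProd (growthFactor β w) (k * n + i) (k * n + i)) *
          ∫⁻ x in A, ENNReal.ofReal x ^ (k * n + i) ∂p 0 := by
  rw [hrec.eq_sum hu, Measure.add_apply, Measure.coe_finsetSum, Finset.sum_apply,
    Measure.smul_apply, withDensity_apply _ hA, smul_eq_mul]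
  congr 1
  refine Finset.sum_congr rfl fun j hj => ?_
  rw [Fin.natCast_mul_add_sub i (Finset.mem_range.1 hj).le, Measure.smul_apply,
    withDensity_apply _ hA, smul_eq_mul]

end Unrolling

lemma ENNReal.tsum_eq_sum_range_tsum_mul_add (k : ℕ) [NeZero k] (g : ℕ → ℝ≥0∞) :
    ∑' j, g j = ∑ r ∈ Finset.range k, ∑' m, g (k * m + r) := by
  rw [← (Nat.divModEquiv k).symm.tsum_eq, ENNReal.tsum_prod', ENNReal.tsum_comm, tsum_fintype,
    ← Fin.sum_univ_eq_sum_range (fun r => ∑' m, g (k * m + r))]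
  simp [Nat.divModEquiv, mul_comm]

lemma ENNReal.ofReal_div_one_sub {a y : ℝ} (ha : 0 ≤ a) (hy0 : 0 ≤ y) (hy1 : y < 1) :
    ENNReal.ofReal (a / (1 - y)) = ∑' m, ENNReal.ofReal (a * y ^ m) := by
  rw [← ENNReal.ofReal_tsum_of_nonneg (fun m => by positivity)
    ((summable_geometric_of_lt_one hy0 hy1).mul_left a), tsum_mul_left,
    tsum_geometric_of_lt_one hy0 hy1, div_eq_mul_inv]

section Cyclic

variable {k : ℕ} [NeZero k]

def cyclicCoef (v : Fin k → ℝ) (i : Fin k) (j : ℕ) : ℝ :=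
  ∏ ℓ ∈ Finset.range j, v (i - ((ℓ + 1 : ℕ) : Fin k))

lemma cyclicCoef_nonneg {v : Fin k → ℝ} (hv : ∀ r, 0 ≤ v r) (i : Fin k) (j : ℕ) :
    0 ≤ cyclicCoef v i j :=
  Finset.prod_nonneg fun _ _ => hv _

lemma cyclicCoef_add_self (v : Fin k → ℝ) (i : Fin k) (j : ℕ) :
    cyclicCoef v i (j + k) = cyclicCoef v i j * ∏ r, v r := by
  rw [cyclicCoef, Finset.prod_range_add]
  congr 1
  rw [← (prod_range_natCast_fin fun r => v (i - ((j + 1 : ℕ) : Fin k) - r)).trans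
    (Fintype.prod_equiv (Equiv.subLeft _) _ v fun _ => rfl)]
  refine Finset.prod_congr rfl fun ℓ _ => congrArg v ?_
  push_cast
  abel

lemma cyclicCoef_mul_add (v : Fin k → ℝ) (i : Fin k) (m j : ℕ) :
    cyclicCoef v i (k * m + j) = (∏ r, v r) ^ m * cyclicCoef v i j := by
  induction m with
  | zero => simp
  | succ m ih =>
    rw [show k * (m + 1) + j = k * m + j + k by ring, cyclicCoef_add_self, ih, pow_succ]
    ring

end Cyclic

section LimitMeasure

variable {k : ℕ} [NeZero k] {β : Fin k → ℝ} {q : Fin k → Measure ℝ} {zf : Fin k → ℝ}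
  {zbar η : ℝ}

lemma ofReal_density_nuMeas_eq_tsum (hβ : ∀ r, 0 ≤ β r) (hzf : ∀ r, 0 ≤ zf r) (hzbar : 0 ≤ zbar)
    (hzbark : zbar ^ k = ∏ r, zf r) (i : Fin k) (j : ℕ) {x : ℝ} (hx0 : 0 ≤ x)
    (hx1 : zbar * x < 1) :
    ENNReal.ofReal (cyclicCoef zf i j / (1 - (zbar * x) ^ k) * x ^ j * β (i - j))
      = ∑' m, ENNReal.ofReal (cyclicCoef zf i (k * m + j) * β (i - j)) *
          ENNReal.ofReal x ^ (k * m + j) := by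
  have hC := cyclicCoef_nonneg hzf i j
  have hβ' := hβ (i - j)
  rw [mul_assoc, div_mul_eq_mul_div, ENNReal.ofReal_div_one_sub (by positivity) (by positivity)
    (pow_lt_one₀ (by positivity) hx1 (NeZero.ne k))]
  refine tsum_congr fun m => ?_
  have hC' := cyclicCoef_nonneg hzf i (k * m + j)
  rw [← ENNReal.ofReal_pow hx0, ← ENNReal.ofReal_mul (by positivity),
    cyclicCoef_mul_add, ← hzbark]
  ring_nf

theorem nuMeas_apply_eq_tsum (hβ : ∀ r, 0 ≤ β r) (hzf : ∀ r, 0 ≤ zf r) (hzbar : 0 ≤ zbar)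
    (hzbark : zbar ^ k = ∏ r, zf r) (hlt : zbar * η < 1) (i : Fin k) {A : Set ℝ}
    (hA : MeasurableSet A) (hAη : A ⊆ Icc 0 η) :
    nuMeas k β q zf zbar i A = ∑' j, ENNReal.ofReal (cyclicCoef zf i j * β (i - j)) *
      ∫⁻ x in A, ENNReal.ofReal x ^ j ∂q (i - j) := by
  rw [ENNReal.tsum_eq_sum_range_tsum_mul_add k, nuMeas, Measure.coe_finsetSum, Finset.sum_apply]
  refine Finset.sum_congr rfl fun j _ => ?_
  have hpt : ∀ x ∈ A, ENNReal.ofReal (cyclicCoef zf i j / (1 - (zbar * x) ^ k) * x ^ j * β (i - j))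
      = ∑' m, ENNReal.ofReal (cyclicCoef zf i (k * m + j) * β (i - j)) *
          ENNReal.ofReal x ^ (k * m + j) := fun x hx =>
    ofReal_density_nuMeas_eq_tsum hβ hzf hzbar hzbark i j (hAη hx).1
      ((mul_le_mul_of_nonneg_left (hAη hx).2 hzbar).trans_lt hlt)
  rw [withDensity_apply _ hA, ← cyclicCoef, setLIntegral_congr_fun hA hpt,
    lintegral_tsum fun m => by fun_prop]
  simp only [Fin.natCast_mul_add, lintegral_const_mul' _ _ ENNReal.ofReal_ne_top]

end LimitMeasure

section Coefficients

lemma exists_prod_Ico_le {s : ℕ → ℝ} {k M : ℕ} {B : ℝ} (hk : 0 < k) (hs : ∀ m, 0 ≤ s m)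
    (hB : ∀ m ≥ M, s m ≤ B) (hcycle : ∀ a ≥ M, ∏ m ∈ Finset.Ico a (a + k), s m ≤ 1) :
    ∃ D, ∀ a b, ∏ m ∈ Finset.Ico a b, s m ≤ D := by
  -- peel off full periods, each contributing a factor at most `1`
  have htail : ∀ a ≥ M, ∀ b, ∏ m ∈ Finset.Ico a b, s m ≤ max 1 B ^ k := by
    intro a ha b
    induction hd : b - a using Nat.strong_induction_on generalizing a with
    | _ d ih =>
      rcases lt_or_ge b (a + k) with hb | hb
      · calc ∏ m ∈ Finset.Ico a b, s m ≤ ∏ m ∈ Finset.Ico a b, max 1 B :=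
              Finset.prod_le_prod (fun _ _ => hs _) fun m hm =>
                (hB m (ha.trans (Finset.mem_Ico.1 hm).1)).trans (le_max_right _ _)
          _ = max 1 B ^ (b - a) := by simp
          _ ≤ max 1 B ^ k := pow_le_pow_right₀ (le_max_left _ _) (by omega)
      · rw [← Finset.prod_Ico_consecutive _ (by omega : a ≤ a + k) hb, ← one_mul (max 1 B ^ k)]
        exact mul_le_mul (hcycle a ha) (ih _ (by omega) (a + k) (by omega) rfl)
          (Finset.prod_nonneg fun _ _ => hs _) zero_le_one
  refine ⟨(∏ m ∈ Finset.range M, max 1 (s m)) * max 1 B ^ k, fun a b => ?_⟩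
  rw [← Finset.prod_filter_mul_prod_filter_not (Finset.Ico a b) (· < M)]
  refine mul_le_mul ?_ ?_ (Finset.prod_nonneg fun _ _ => hs _)
    (Finset.prod_nonneg fun _ _ => zero_le_one.trans (le_max_left _ _))
  · calc ∏ m ∈ (Finset.Ico a b).filter (· < M), s m
        ≤ ∏ m ∈ (Finset.Ico a b).filter (· < M), max 1 (s m) :=
          Finset.prod_le_prod (fun _ _ => hs _) fun _ _ => le_max_right _ _
      _ ≤ ∏ m ∈ Finset.range M, max 1 (s m) :=
          Finset.prod_le_prod_of_subset_of_one_le (fun m hm => by simp_all)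
            (fun _ _ => zero_le_one.trans (le_max_left _ _)) fun _ _ _ => le_max_left _ _
  · have hfilter : (Finset.Ico a b).filter (fun m => ¬ m < M) = Finset.Ico (max a M) (max b M) := by
      ext m
      simp only [Finset.mem_filter, Finset.mem_Ico]
      omega
    rw [hfilter]
    exact htail _ (le_max_right _ _) _

variable {k : ℕ} [NeZero k] {u : ℕ → ℝ} {v : Fin k → ℝ}

lemma exists_trailingProd_le (hu : ∀ m, 0 ≤ u m) (hv : ∀ r, 0 < v r) {zbar ζ : ℝ}
    (hzbar : 0 < zbar) (hzbark : zbar ^ k = ∏ r, v r) (hζ : zbar < ζ)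
    (hρ : Tendsto (fun m => u m / v m) atTop (𝓝 1)) :
    ∃ D, ∀ N j, j ≤ N → trailingProd u N j ≤ D * ζ ^ j := by
  have hζpos : 0 < ζ := hzbar.trans hζ
  obtain ⟨M, hM⟩ := eventually_atTop.1 (hρ.eventually (gt_mem_nhds ((one_lt_div hzbar).2 hζ)))
  have hle : ∀ m ≥ M, u m / ζ ≤ v m / zbar := fun m hm => by
    have := hM m hm
    rw [div_lt_div_iff₀ (hv _) hzbar] at this
    rw [div_le_div_iff₀ hζpos hzbar]
    linarith
  obtain ⟨D, hD⟩ := exists_prod_Ico_le (s := fun m => u m / ζ) (B := ∑ r, v r / zbar)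
    (NeZero.pos k) (fun m => div_nonneg (hu m) hζpos.le)
    (fun m hm => (hle m hm).trans (Finset.single_le_sum (f := fun r => v r / zbar)
      (fun r _ => div_nonneg (hv r).le hzbar.le) (Finset.mem_univ _)))
    (fun a ha => by
      calc ∏ m ∈ Finset.Ico a (a + k), u m / ζ ≤ ∏ m ∈ Finset.Ico a (a + k), v m / zbar :=
            Finset.prod_le_prod (fun m _ => div_nonneg (hu m) hζpos.le)
              fun m hm => hle m (ha.trans (Finset.mem_Ico.1 hm).1)
        _ = 1 := by
          rw [Finset.prod_div_distrib, prod_Ico_natCast_fin v, Finset.prod_const, Nat.card_Ico,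
            Nat.add_sub_cancel_left, ← hzbark, div_self (pow_pos hzbar k).ne'])
  refine ⟨D, fun N j hj => ?_⟩
  have := hD (N - j) N
  rwa [Finset.prod_div_distrib, Finset.prod_const, Nat.card_Ico, Nat.sub_sub_self hj,
    div_le_iff₀ (pow_pos hζpos j), ← trailingProd_eq_prod_Ico hj] at this

lemma tendsto_trailingProd (hv : ∀ r, v r ≠ 0) (hρ : Tendsto (fun m => u m / v m) atTop (𝓝 1))
    (i : Fin k) (j : ℕ) :
    Tendsto (fun n => trailingProd u (k * n + i) j) atTop (𝓝 (cyclicCoef v i j)) := by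
  refine tendsto_finsetProd _ fun ℓ _ => ?_
  have hidx : Tendsto (fun n => k * n + i - (ℓ + 1)) atTop atTop :=
    tendsto_atTop_atTop.2 fun b => ⟨b + ℓ + 1, fun n hn => by
      have := Nat.le_mul_of_pos_left n (NeZero.pos k)
      omega⟩
  have hlim := (hρ.comp hidx).mul_const (v (i - ((ℓ + 1 : ℕ) : Fin k)))
  rw [one_mul] at hlim
  refine hlim.congr' (eventually_atTop.2 ⟨ℓ + 1, fun n hn => ?_⟩)
  have hle : ℓ + 1 ≤ k * n + i := by
    have := Nat.le_mul_of_pos_left n (NeZero.pos k)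
    omega
  simp only [Function.comp_apply, Fin.natCast_mul_add_sub i hle]
  exact div_mul_cancel₀ _ (hv _)

end Coefficients

section Convergence

lemma tendsto_of_forall_tendsto_mul_add {α : Type*} {k : ℕ} [NeZero k] {f : ℕ → α}
    {l : Filter α} (h : ∀ r : Fin k, Tendsto (fun n => f (k * n + r)) atTop l) :
    Tendsto f atTop l := by
  intro s hs
  obtain ⟨N, hN⟩ := eventually_atTop.1 (eventually_all.2 fun r => h r hs)
  refine mem_atTop_sets.2 ⟨k * N, fun m hm => ?_⟩
  have := hN (m / k) ((Nat.le_div_iff_mul_le (NeZero.pos k)).2 (by linarith)) m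
  simp only [Fin.val_natCast, Nat.div_add_mod] at this
  exact this

lemma tendsto_tsum_truncation_error {b : ℕ → ℕ → ℝ} {c : ℕ → ℝ} {N : ℕ → ℕ} {D θ : ℝ}
    (hN : Tendsto N atTop atTop) (hθ0 : 0 ≤ θ) (hθ1 : θ < 1)
    (hb : ∀ n j, j ≤ N n → |b n j| ≤ D * θ ^ j) (hc : ∀ j, |c j| ≤ D * θ ^ j)
    (hlim : ∀ j, Tendsto (fun n => b n j) atTop (𝓝 (c j))) :
    Tendsto (fun n => ∑' j, |(if j < N n then b n j else 0) - c j| + |b n (N n)|) atTop (𝓝 0) := by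
  have hD : 0 ≤ D := (abs_nonneg _).trans ((hc 0).trans_eq (by simp))
  have hgeom : Tendsto (fun n => D * θ ^ N n) atTop (𝓝 0) := by
    simpa using ((tendsto_pow_atTop_nhds_zero_of_lt_one hθ0 hθ1).comp hN).const_mul D
  rw [← zero_add (0 : ℝ)]
  refine Tendsto.add ?_ (squeeze_zero (fun _ => abs_nonneg _) (fun n => hb n _ le_rfl) hgeom)
  rw [← tsum_zero]
  refine tendsto_tsum_of_dominated_convergence (bound := fun j => 2 * D * θ ^ j)
    ((summable_geometric_of_lt_one hθ0 hθ1).mul_left _) (fun j => ?_)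
    (Eventually.of_forall fun n j => ?_)
  · have hj : ∀ᶠ n in atTop, j < N n := hN.eventually_gt_atTop j
    simpa using ((hlim j).sub_const (c j)).abs.congr' (hj.mono fun n hn => by simp [hn])
  · rw [Real.norm_eq_abs, abs_abs, two_mul, add_mul]
    refine (abs_sub _ _).trans (add_le_add ?_ (hc j))
    split_ifs with hj
    · exact hb n j hj.le
    · simpa using mul_nonneg hD (pow_nonneg hθ0 j)

lemma abs_sum_sub_tsum_le {N : ℕ} {a c t : ℕ → ℝ} {r η : ℝ} (hη : 0 ≤ η) (hc : ∀ j, 0 ≤ c j)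
    (ht : ∀ j, t j ∈ Icc 0 (η ^ j)) (hr : r ∈ Icc 0 (η ^ N))
    (hsum : Summable fun j => c j * η ^ j) :
    |∑ j ∈ Finset.range N, a j * t j + a N * r - ∑' j, c j * t j|
      ≤ ∑' j, |(if j < N then a j * η ^ j else 0) - c j * η ^ j| + |a N * η ^ N| := by
  set a' : ℕ → ℝ := fun j => if j < N then a j else 0
  have hfin : ∀ j ∉ Finset.range N, a' j * t j = 0 := fun j hj => by
    simp [a', Finset.mem_range.not.1 hj]
  have hsum_a : ∑ j ∈ Finset.range N, a j * t j = ∑' j, a' j * t j :=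
    (tsum_eq_sum hfin).trans (Finset.sum_congr rfl fun j hj => by
      simp [a', Finset.mem_range.1 hj]) |>.symm
  have hsum_c : Summable fun j => c j * t j :=
    hsum.of_nonneg_of_le (fun j => mul_nonneg (hc j) (ht j).1)
      fun j => mul_le_mul_of_nonneg_left (ht j).2 (hc j)
  have hterm : ∀ j, |a' j - c j| * η ^ j = |(if j < N then a j * η ^ j else 0) - c j * η ^ j| :=
    fun j => by
      rw [← abs_of_nonneg (pow_nonneg hη j), ← abs_mul, abs_of_nonneg (pow_nonneg hη j)]
      split_ifs <;> simp [a', *, sub_mul]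
  have hsum_err : Summable fun j => |a' j - c j| * η ^ j :=
    ((summable_of_ne_finset_zero (s := Finset.range N) (f := fun j => |a' j| * η ^ j)
      fun j hj => by simp [a', Finset.mem_range.not.1 hj]).add hsum).of_nonneg_of_le
      (fun j => by positivity) fun j => by
        rw [← add_mul]
        exact mul_le_mul_of_nonneg_right ((abs_sub _ _).trans_eq (by rw [abs_of_nonneg (hc j)]))
          (pow_nonneg hη j)
  rw [hsum_a, add_sub_right_comm, ← (summable_of_ne_finset_zero hfin).tsum_sub hsum_c]
  refine (abs_add_le _ _).trans (add_le_add ?_ ?_)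
  · simp_rw [← hterm]
    refine (Real.norm_eq_abs _).symm.trans_le (tsum_of_norm_bounded hsum_err.hasSum fun j => ?_)
    rw [Real.norm_eq_abs, ← sub_mul, abs_mul, abs_of_nonneg (ht j).1]
    exact mul_le_mul_of_nonneg_left (ht j).2 (abs_nonneg _)
  · rw [abs_mul, abs_mul, abs_of_nonneg hr.1, abs_of_nonneg (pow_nonneg hη N)]
    exact mul_le_mul_of_nonneg_left hr.2 (abs_nonneg _)

lemma abs_toReal_sub_toReal_le {N : ℕ} {a c β' : ℕ → ℝ} {T : ℕ → ℝ≥0∞} {R : ℝ≥0∞} {η : ℝ}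
    (hη : 0 ≤ η) (ha : ∀ j, 0 ≤ a j) (hc : ∀ j, 0 ≤ c j) (hβ' : ∀ j, β' j ∈ Icc 0 1)
    (hT : ∀ j, T j ≤ ENNReal.ofReal (η ^ j)) (hR : R ≤ ENNReal.ofReal (η ^ N))
    (hsum : Summable fun j => c j * η ^ j) :
    |(∑ j ∈ Finset.range N, ENNReal.ofReal (a j * β' j) * T j
        + ENNReal.ofReal (a N) * R).toReal
      - (∑' j, ENNReal.ofReal (c j * β' j) * T j).toReal|
      ≤ ∑' j, |(if j < N then a j * η ^ j else 0) - c j * η ^ j| + |a N * η ^ N| := by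
  have hTtop : ∀ j, T j ≠ ⊤ := fun j => ne_top_of_le_ne_top ENNReal.ofReal_ne_top (hT j)
  have ht : ∀ j, β' j * (T j).toReal ∈ Icc 0 (η ^ j) := fun j =>
    ⟨mul_nonneg (hβ' j).1 ENNReal.toReal_nonneg,
      (mul_le_of_le_one_left ENNReal.toReal_nonneg (hβ' j).2).trans
        (ENNReal.toReal_le_of_le_ofReal (by positivity) (hT j))⟩
  have hr : R.toReal ∈ Icc 0 (η ^ N) :=
    ⟨ENNReal.toReal_nonneg, ENNReal.toReal_le_of_le_ofReal (by positivity) hR⟩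
  convert abs_sum_sub_tsum_le hη hc ht hr hsum using 3
  · rw [ENNReal.toReal_add (by simp [ENNReal.mul_eq_top, hTtop]) (by simp [ENNReal.mul_eq_top,
      ne_top_of_le_ne_top ENNReal.ofReal_ne_top hR]), ENNReal.toReal_sum (fun j _ => by
      simp [ENNReal.mul_eq_top, hTtop])]
    simp only [ENNReal.toReal_mul, ENNReal.toReal_ofReal (mul_nonneg (ha _) (hβ' _).1),
      ENNReal.toReal_ofReal (ha _), mul_assoc]
  · rw [ENNReal.tsum_toReal_eq fun j => by simp [ENNReal.mul_eq_top, hTtop]]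
    simp only [ENNReal.toReal_mul, ENNReal.toReal_ofReal (mul_nonneg (hc _) (hβ' _).1), mul_assoc]

lemma TVConvOn.of_abs_sub_le {p : ℕ → Measure ℝ} {π : Measure ℝ} {s : Set ℝ} {E : ℕ → ℝ}
    (hE : Tendsto E atTop (𝓝 0))
    (h : ∀ n A, MeasurableSet A → A ⊆ s → |(p n A).toReal - (π A).toReal| ≤ E n) :
    TVConvOn p π s := fun ε hε => by
  obtain ⟨N, hN⟩ := eventually_atTop.1 (hE.eventually (gt_mem_nhds hε))
  exact ⟨N, fun n hn A hA hAs => (h n A hA hAs).trans_lt (hN n hn)⟩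

lemma TVConvOn.isProbabilityMeasure {p : ℕ → Measure ℝ} {π : Measure ℝ} {s : Set ℝ}
    (h : TVConvOn p π s) (hs : MeasurableSet s) (hp : ∀ n, p n s = 1) (hπ : π sᶜ = 0) :
    IsProbabilityMeasure π := by
  have hπs : (π s).toReal = 1 := eq_of_forall_dist_le fun ε hε => by
    obtain ⟨N, hN⟩ := h ε hε
    have := hN N le_rfl s hs subset_rfl
    rw [hp, ENNReal.toReal_one, abs_sub_comm] at this
    exact (Real.dist_eq _ _ ▸ this).le
  rw [ENNReal.toReal_eq_one_iff] at hπs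
  exact ⟨by rw [← measure_add_measure_compl hs, hπs, hπ, add_zero]⟩

end Convergence

lemma setLIntegral_ofReal_pow_le {μ : Measure ℝ} [IsProbabilityMeasure μ] {A : Set ℝ} {η : ℝ}
    (hA : A ⊆ Icc 0 η) (j : ℕ) : ∫⁻ x in A, ENNReal.ofReal x ^ j ∂μ ≤ ENNReal.ofReal (η ^ j) :=
  calc ∫⁻ x in A, ENNReal.ofReal x ^ j ∂μ ≤ ∫⁻ _ in A, ENNReal.ofReal (η ^ j) ∂μ :=
        setLIntegral_mono measurable_const fun x hx => by
          rw [← ENNReal.ofReal_pow (hA hx).1]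
          exact ENNReal.ofReal_le_ofReal (pow_le_pow_left₀ (hA hx).1 (hA hx).2 j)
    _ ≤ ENNReal.ofReal (η ^ j) := by
        rw [setLIntegral_const]
        exact mul_le_of_le_one_right' prob_le_one

lemma exists_gt_mul_lt_one {z η : ℝ} (hη : 0 ≤ η) (h : z * η < 1) : ∃ ζ, z < ζ ∧ ζ * η < 1 := by
  refine ⟨z + (1 - z * η) / (η + 1), lt_add_of_pos_right _ (by apply div_pos <;> linarith), ?_⟩
  have : (1 - z * η) / (η + 1) * η < 1 - z * η := by
    rw [div_mul_eq_mul_div, div_lt_iff₀ (by linarith)]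
    nlinarith
  linarith [add_mul z ((1 - z * η) / (η + 1)) η]

section Limit

variable {k : ℕ} [NeZero k] {β : Fin k → ℝ} {q : Fin k → Measure ℝ} {p : ℕ → Measure ℝ}
  {w : ℕ → ℝ} {zf : Fin k → ℝ} {zbar η : ℝ}

theorem KingmanRec.tvConvOn_nuMeas [∀ i, IsProbabilityMeasure (q i)] [IsProbabilityMeasure (p 0)]
    (hrec : KingmanRec k β q p w) (hβ : ∀ i, β i ∈ Ioo 0 1) (hu : ∀ m, 0 ≤ growthFactor β w m)
    (hzf : ∀ r, 0 < zf r) (hzbar : 0 < zbar) (hzbark : zbar ^ k = ∏ r, zf r) (hη : 0 ≤ η)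
    (hlt : zbar * η < 1) (hρ : Tendsto (fun m => growthFactor β w m / zf m) atTop (𝓝 1))
    (i : Fin k) :
    TVConvOn (fun n => p (k * n + i)) (nuMeas k β q zf zbar i) (Icc 0 η) := by
  obtain ⟨ζ, hζ, hζη⟩ := exists_gt_mul_lt_one hη hlt
  obtain ⟨D, hD⟩ := exists_trailingProd_le hu hzf hzbar hzbark hζ hρ
  have hθ : 0 ≤ ζ * η := mul_nonneg (hzbar.trans hζ).le hη
  have hb : ∀ N j, j ≤ N → |trailingProd (growthFactor β w) N j * η ^ j| ≤ D * (ζ * η) ^ j :=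
    fun N j hj => by
      rw [abs_of_nonneg (mul_nonneg (trailingProd_nonneg hu N j) (pow_nonneg hη j)), mul_pow,
        ← mul_assoc]
      exact mul_le_mul_of_nonneg_right (hD N j hj) (pow_nonneg hη j)
  have hN : Tendsto (fun n => k * n + (i : ℕ)) atTop atTop :=
    tendsto_atTop_mono (fun n => (Nat.le_mul_of_pos_left n (NeZero.pos k)).trans
      (Nat.le_add_right _ _)) tendsto_id
  have hlim : ∀ j, Tendsto (fun n => trailingProd (growthFactor β w) (k * n + i) j * η ^ j)
      atTop (𝓝 (cyclicCoef zf i j * η ^ j)) := fun j =>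
    (tendsto_trailingProd (fun r => (hzf r).ne') hρ i j).mul_const _
  have hc : ∀ j, |cyclicCoef zf i j * η ^ j| ≤ D * (ζ * η) ^ j := fun j =>
    le_of_tendsto (hlim j).abs ((hN.eventually_ge_atTop j).mono fun n hn => hb _ j hn)
  refine TVConvOn.of_abs_sub_le (tendsto_tsum_truncation_error hN hθ hζη
    (fun n j hj => hb _ j hj) hc hlim) fun n A hA hAη => ?_
  rw [hrec.apply_eq hu i n hA, nuMeas_apply_eq_tsum (fun r => (hβ r).1.le) (fun r => (hzf r).le)
    hzbar.le hzbark hlt i hA hAη]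
  exact abs_toReal_sub_toReal_le hη (trailingProd_nonneg hu _) (cyclicCoef_nonneg
    (fun r => (hzf r).le) i) (fun j => ⟨(hβ _).1.le, (hβ _).2.le⟩)
    (fun j => setLIntegral_ofReal_pow_le hAη j) (setLIntegral_ofReal_pow_le hAη _)
    (((summable_geometric_of_lt_one hθ hζη).mul_left D).of_norm_bounded hc)

end Limit

section Assembly

variable {k : ℕ} [NeZero k] {β : Fin k → ℝ} {q : Fin k → Measure ℝ} {p : ℕ → Measure ℝ}
  {w : ℕ → ℝ} {η : ℝ}

lemma nuMeas_compl_Icc (hq : ∀ r, q r (Icc 0 η)ᶜ = 0) (β : Fin k → ℝ) (zf : Fin k → ℝ)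
    (zbar : ℝ) (i : Fin k) : nuMeas k β q zf zbar i (Icc 0 η)ᶜ = 0 := by
  simp [nuMeas, withDensity_absolutelyContinuous _ _ (hq _)]

theorem KingmanRec.pos_of_tendsto [∀ i, IsProbabilityMeasure (q i)]
    (hrec : KingmanRec k β q p w) (hβ : ∀ i, β i ∈ Ioo 0 1) (hq : ∀ i, q i (Icc 0 η)ᶜ = 0)
    (hqpos : ∀ i, 0 < ∫ x, x ∂q i)
    (hinv : ∀ n, IsProbabilityMeasure (p n) ∧ p n (Icc 0 η)ᶜ = 0 ∧ 0 < w n) {r : Fin k} {l : ℝ}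
    (hl : Tendsto (fun n => w (k * n + r)) atTop (𝓝 l)) : 0 < l := by
  refine (mul_pos (hβ r).1 (hqpos r)).trans_le (ge_of_tendsto hl ?_)
  filter_upwards [eventually_ge_atTop 1] with n hn
  obtain ⟨m, hm⟩ : ∃ m, k * n + r = m + 1 :=
    ⟨k * n + r - 1, by have := Nat.le_mul_of_pos_left n (NeZero.pos k); omega⟩
  have := hrec.le_w_succ hβ hq (hinv m).1 (hinv m).2.1 (hinv m).2.2
  rwa [← hm, Fin.natCast_mul_add_val] at this

lemma tendsto_growthFactor_div {wbar zf : Fin k → ℝ} (hβ : ∀ i, β i ∈ Ioo 0 1)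
    (hwbar : ∀ r, 0 < wbar r)
    (hconv : ∀ r : Fin k, Tendsto (fun n => w (k * n + r)) atTop (𝓝 (wbar r)))
    (hzf : ∀ r, zf r = (1 - β (r + 1)) / wbar r) :
    Tendsto (fun m => growthFactor β w m / zf m) atTop (𝓝 1) := by
  refine tendsto_of_forall_tendsto_mul_add (k := k) fun r => ?_
  have hβr : 1 - β (r + 1) ≠ 0 := (sub_pos.2 (hβ _).2).ne'
  have hlim := (tendsto_const_nhds (x := 1 - β (r + 1))).div (hconv r) (hwbar r).ne' |>.div_const
    ((1 - β (r + 1)) / wbar r)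
  rw [div_self (div_ne_zero hβr (hwbar r).ne')] at hlim
  refine hlim.congr fun n => ?_
  rw [growthFactor, Nat.cast_succ, Fin.natCast_mul_add_val, hzf, Pi.div_apply]

lemma pow_eq_prod_of_eq_rpow {zf : Fin k → ℝ} (hzf : ∀ r, 0 < zf r) {zbar : ℝ}
    (hzbar : zbar = (∏ r, zf r) ^ ((1 : ℝ) / k)) : zbar ^ k = ∏ r, zf r := by
  rw [hzbar, one_div, Real.rpow_inv_natCast_pow (Finset.prod_nonneg fun r _ => (hzf r).le)
    (NeZero.ne k)]

end Assembly

/-- Assume `z̄ η₀ < 1`. Then for each `i ∈ K`, the sequence `(p_{kn+i})_n`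
converges in total variation on all of `[0, η₀]` to the probability measure
`π_i = Σ_j (z_{[i−1]} ⋯ z_{[i−j]}/(1 − (z̄x)^k)) x^j β_{[i−j]} q_{[i−j]}(dx)`;
in particular no atom appears at `η₀`. -/
theorem stmt_11 (k : ℕ) [NeZero k] (β : Fin k → ℝ) (q : Fin k → Measure ℝ)
    [∀ i, IsProbabilityMeasure (q i)]
    (p₀ : Measure ℝ) [IsProbabilityMeasure p₀]
    (hβ : ∀ i, β i ∈ Set.Ioo (0:ℝ) 1)
    (hq : ∀ i, q i (Set.Icc (0:ℝ) 1)ᶜ = 0) (hp₀ : p₀ (Set.Icc (0:ℝ) 1)ᶜ = 0)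
    (hη : ∀ i, 0 < etaSup (q i) ∧ etaSup (q i) ≤ etaSup p₀)
    (p : ℕ → Measure ℝ) (w : ℕ → ℝ)
    (hp0 : p 0 = p₀) (hrec : KingmanRec k β q p w)
    (wbar : Fin k → ℝ)
    (hconv : ∀ i : Fin k, Tendsto (fun n => w (k * n + (i : ℕ))) atTop (nhds (wbar i)))
    (zf : Fin k → ℝ) (hzf : ∀ i : Fin k, zf i = (1 - β (i + 1)) / wbar i)
    (zbar : ℝ) (hzbar : zbar = (∏ i, zf i) ^ ((1 : ℝ) / k))
    (hlt : zbar * etaSup p₀ < 1) :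
    ∀ i : Fin k,
      IsProbabilityMeasure (nuMeas k β q zf zbar i) ∧
      TVConvOn (fun n => p (k * n + (i : ℕ))) (nuMeas k β q zf zbar i)
        (Set.Icc 0 (etaSup p₀)) := by
  intro i
  subst hp0
  have hη₀ : 0 < etaSup (p 0) := (hη 0).1.trans_le (hη 0).2
  have hqη : ∀ r, q r (Icc 0 (etaSup (p 0)))ᶜ = 0 := fun r =>
    measure_compl_Icc_eq_zero_of_etaSup_le (hq r) (hη r).2
  have hqpos : ∀ r, 0 < ∫ x, x ∂q r := fun r => integral_id_pos_of_etaSup_pos (hq r) (hη r).1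
  have hinv := hrec.invariants hβ hqη hqpos inferInstance
    (measure_compl_Icc_eq_zero_of_etaSup_le hp₀ le_rfl)
    (hrec.1 0 ▸ integral_id_pos_of_etaSup_pos hp₀ hη₀)
  have hwbar : ∀ r, 0 < wbar r := fun r => hrec.pos_of_tendsto hβ hqη hqpos hinv (hconv r)
  have hzfpos : ∀ r, 0 < zf r := fun r => hzf r ▸ div_pos (sub_pos.2 (hβ _).2) (hwbar r)
  have htv := hrec.tvConvOn_nuMeas hβ (growthFactor_nonneg hβ fun n => (hinv n).2.2) hzfpos
    (hzbar ▸ Real.rpow_pos_of_pos (Finset.prod_pos fun r _ => hzfpos r) _)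
    (pow_eq_prod_of_eq_rpow hzfpos hzbar) hη₀.le hlt
    (tendsto_growthFactor_div hβ hwbar hconv hzf) i
  refine ⟨htv.isProbabilityMeasure measurableSet_Icc (fun n => ?_)
    (nuMeas_compl_Icc hqη β zf zbar i), htv⟩
  have := (hinv (k * n + i)).1
  exact (prob_compl_eq_zero_iff measurableSet_Icc).1 (hinv _).2.1
end
end

section
/- Let V = (v₀,…,v_{k−1}) be the column vector defined by v_i := z_{k−1} z_{k−2} ⋯ z_i / z̄^{k−i} (so that v₀ = 1). Then there exists a constant α ≥ 0 such that A(z̄) V + α·𝟏 = V, where 𝟏 is the all-ones vector. Furthermore, if z̄ < 1/η₀ then α = 0. -/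
open MeasureTheory Matrix Filter
open Fin.NatCast

noncomputable section

/-!
Unrolling Kingman's recursion `T` times splits the total mass `1` of `p_N` into the mutants
injected during the last `T` generations, each weighted by a product of the factors
`ζ_r = (1 - β_{[r+1]}) / w_r`, plus a residual term `∏ ζ_r · ∫ x^T p_{N-T}(dx)`. Along
`N ≡ i (mod k)` the products converge to `z̄^t V_{i-t} / V_i`, so that
`V_i = ∑_t V_{i-t} β_{i-t} ∫ (z̄x)^t q_{i-t}(dx) + α_i` with `α_i ≥ 0` the limit of the residuals.
Expanding `1 / (1 - (z̄x)^k)` as a geometric series and grouping `t` by residues mod `k`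
identifies the series with `(A(z̄) V)_i`. Since all `p_N` live on `[0, η₀]`, the residuals obey
`α_{i+1} ≤ z̄ η₀ α_i`; comparing `∏ ζ_r · ∫ x^N p₀(dx) ≤ 1` with the mass of `p₀` near `η₀`
gives `z̄ η₀ ≤ 1`. Hence `α` is constant around the cycle, and it vanishes if `z̄ η₀ < 1`.
-/

open scoped Topology

namespace Kingman

section Moments

variable {μ : Measure ℝ} {c : ℝ}

lemma integrable_pow_of_ae_mem_Icc [IsFiniteMeasure μ] (h : ∀ᵐ x ∂μ, x ∈ Set.Icc 0 c)
    (n : ℕ) : Integrable (fun x : ℝ => x ^ n) μ := by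
  refine (integrable_const (c ^ n)).mono' (by fun_prop) ?_
  filter_upwards [h] with x hx
  rw [Real.norm_eq_abs, abs_pow, abs_of_nonneg hx.1]
  exact pow_le_pow_left₀ hx.1 hx.2 n

lemma integral_pow_nonneg (h : ∀ᵐ x ∂μ, 0 ≤ x) (n : ℕ) : 0 ≤ ∫ x, x ^ n ∂μ :=
  integral_nonneg_of_ae <| h.mono fun _ hx => pow_nonneg hx n

lemma integral_pow_succ_le [IsFiniteMeasure μ] (h : ∀ᵐ x ∂μ, x ∈ Set.Icc 0 c) (n : ℕ) :
    ∫ x, x ^ (n + 1) ∂μ ≤ c * ∫ x, x ^ n ∂μ := by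
  rw [← integral_const_mul]
  refine integral_mono_ae (integrable_pow_of_ae_mem_Icc h _)
    ((integrable_pow_of_ae_mem_Icc h n).const_mul c) ?_
  filter_upwards [h] with x hx
  rw [pow_succ']
  exact mul_le_mul_of_nonneg_right hx.2 (pow_nonneg hx.1 n)

lemma mul_measureReal_Ici_le_integral_pow (h : ∀ᵐ x ∂μ, 0 ≤ x) {n : ℕ}
    (hint : Integrable (fun x : ℝ => x ^ n) μ) (hc : 0 ≤ c) :
    c ^ n * μ.real (Set.Ici c) ≤ ∫ x, x ^ n ∂μ := by
  have hind : ∫ x, (Set.Ici c).indicator (fun _ => c ^ n) x ∂μ ≤ ∫ x, x ^ n ∂μ := by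
    refine integral_mono_of_nonneg (Eventually.of_forall fun x => ?_) hint ?_
    · exact Set.indicator_nonneg (fun _ _ => pow_nonneg hc n) x
    filter_upwards [h] with x hx
    by_cases hxc : x ∈ Set.Ici c
    · rw [Set.indicator_of_mem hxc]; exact pow_le_pow_left₀ hc hxc n
    · rw [Set.indicator_of_notMem hxc]; exact pow_nonneg hx n
  rwa [integral_indicator_const _ measurableSet_Ici, smul_eq_mul, mul_comm] at hind

end Moments

section EtaSup

lemma etaSup_nonneg (μ : Measure ℝ) : 0 ≤ etaSup μ :=
  Real.sSup_nonneg fun _ hx => hx.1.1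

variable {μ : Measure ℝ}

lemma measureReal_Ici_pos_of_lt_etaSup [IsFiniteMeasure μ] {c : ℝ} (hc0 : 0 ≤ c)
    (hc : c < etaSup μ) : 0 < μ.real (Set.Ici c) := by
  obtain ⟨x, hx, hcx⟩ := exists_lt_of_lt_csSup (Set.nonempty_iff_ne_empty.2 fun h => by
    rw [etaSup, h, Real.sSup_empty] at hc; linarith) hc
  refine ENNReal.toReal_pos (hx.2.trans_le (measure_mono ?_)).ne' (measure_ne_top _ _)
  exact Set.Icc_subset_Icc_left hcx.le |>.trans Set.Icc_subset_Ici_self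

lemma integral_pos_of_etaSup_pos [IsFiniteMeasure μ] (h : ∀ᵐ x ∂μ, x ∈ Set.Icc (0 : ℝ) 1)
    (hη : 0 < etaSup μ) : 0 < ∫ x, x ∂μ := by
  have hc : 0 < etaSup μ / 2 := half_pos hη
  have := mul_measureReal_Ici_le_integral_pow (h.mono fun _ hx => hx.1)
    (integrable_pow_of_ae_mem_Icc h 1) hc.le
  simp only [pow_one] at this
  exact (mul_pos hc (measureReal_Ici_pos_of_lt_etaSup hc.le (half_lt_self hη))).trans_le this

lemma ae_mem_Icc_etaSup (h : ∀ᵐ x ∂μ, x ∈ Set.Icc (0 : ℝ) 1) :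
    ∀ᵐ x ∂μ, x ∈ Set.Icc 0 (etaSup μ) := by
  have hnull (n : ℕ) : μ (Set.Icc (etaSup μ + 1 / (n + 1)) 1) = 0 := by
    by_contra hpos
    have hle : etaSup μ + 1 / (n + 1) ≤ 1 := not_lt.1 fun hgt => hpos <| by
      rw [Set.Icc_eq_empty_of_lt hgt, measure_empty]
    have hsup : etaSup μ + 1 / (n + 1) ≤ etaSup μ := le_csSup ⟨1, fun _ hx => hx.1.2⟩
      ⟨⟨by positivity [etaSup_nonneg μ], hle⟩, pos_iff_ne_zero.2 hpos⟩
    linarith [Nat.one_div_pos_of_nat (α := ℝ) (n := n)]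
  filter_upwards [h, measure_eq_zero_iff_ae_notMem.1 (measure_iUnion_null hnull)] with x hx hxU
  refine ⟨hx.1, not_lt.1 fun hlt => hxU ?_⟩
  obtain ⟨n, hn⟩ := exists_nat_one_div_lt (sub_pos.2 hlt)
  exact Set.mem_iUnion.2 ⟨n, by linarith, hx.2⟩

end EtaSup

section Step

/-- The right-hand side of Kingman's recursion; `w` stands for the mean fitness `∫ x ∂ν`. -/
def kingmanStep (b : ℝ) (Q ν : Measure ℝ) (w : ℝ) : Measure ℝ :=
  ENNReal.ofReal b • Q + ν.withDensity fun x => ENNReal.ofReal ((1 - b) * x / w)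

variable {b w c : ℝ} {Q ν : Measure ℝ}

lemma ae_kingmanStep {s : Set ℝ} (hQ : ∀ᵐ x ∂Q, x ∈ s) (hν : ∀ᵐ x ∂ν, x ∈ s) :
    ∀ᵐ x ∂kingmanStep b Q ν w, x ∈ s :=
  ae_add_measure_iff.2
    ⟨Measure.ae_smul_measure hQ _, (withDensity_absolutelyContinuous ν _).ae_le hν⟩

lemma isFiniteMeasure_kingmanStep [IsFiniteMeasure Q] [IsFiniteMeasure ν]
    (hν : ∀ᵐ x ∂ν, x ∈ Set.Icc 0 c) : IsFiniteMeasure (kingmanStep b Q ν w) := by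
  have hfi : Integrable (fun x => (1 - b) * x / w) ν :=
    ((integrable_pow_of_ae_mem_Icc hν 1).const_mul ((1 - b) / w)).congr
      (Eventually.of_forall fun x => by simp only [pow_one]; ring)
  have := isFiniteMeasure_withDensity_ofReal hfi.2
  have := Q.smul_finite (ENNReal.ofReal_ne_top (r := b))
  unfold kingmanStep; infer_instance

lemma integral_pow_kingmanStep [IsFiniteMeasure Q] [IsFiniteMeasure ν]
    (hQ : ∀ᵐ x ∂Q, x ∈ Set.Icc 0 c) (hν : ∀ᵐ x ∂ν, x ∈ Set.Icc 0 c) (hb0 : 0 ≤ b) (hb1 : b ≤ 1)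
    (hw : 0 ≤ w) (n : ℕ) :
    ∫ x, x ^ n ∂kingmanStep b Q ν w = b * ∫ x, x ^ n ∂Q + (1 - b) / w * ∫ x, x ^ (n + 1) ∂ν := by
  have := isFiniteMeasure_kingmanStep (b := b) (w := w) (Q := Q) hν
  have hint := integrable_pow_of_ae_mem_Icc (ae_kingmanStep (b := b) (w := w) hQ hν) n
  rw [kingmanStep] at hint ⊢
  rw [integral_add_measure (hint.mono_measure (Measure.le_add_right le_rfl))
      (hint.mono_measure (Measure.le_add_left le_rfl)), integral_smul_measure,
    ENNReal.toReal_ofReal hb0, smul_eq_mul,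
    integral_withDensity_eq_integral_toReal_smul (by fun_prop) (by simp),
    ← integral_const_mul ((1 - b) / w)]
  congr 1
  refine integral_congr_ae ?_
  filter_upwards [hν] with x hx
  rw [ENNReal.toReal_ofReal (by have := hx.1; positivity [sub_nonneg.2 hb1]), smul_eq_mul]
  ring

lemma isProbabilityMeasure_kingmanStep [IsProbabilityMeasure Q] [IsProbabilityMeasure ν]
    (hQ : ∀ᵐ x ∂Q, x ∈ Set.Icc 0 c) (hν : ∀ᵐ x ∂ν, x ∈ Set.Icc 0 c) (hb0 : 0 ≤ b) (hb1 : b ≤ 1)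
    (hw : w = ∫ x, x ∂ν) (hw0 : 0 < w) : IsProbabilityMeasure (kingmanStep b Q ν w) := by
  have := isFiniteMeasure_kingmanStep (b := b) (w := w) (Q := Q) hν
  have hmass := integral_pow_kingmanStep hQ hν hb0 hb1 hw0.le 0
  simp only [pow_zero, integral_const, probReal_univ, smul_eq_mul, mul_one, zero_add, pow_one,
    ← hw, div_mul_cancel₀ _ hw0.ne', add_sub_cancel] at hmass
  exact ⟨(ENNReal.toReal_eq_one_iff _).1 hmass⟩

end Step

section ResidueFilter

variable {k : ℕ} [NeZero k]

def residueFilter (k : ℕ) [NeZero k] (i : Fin k) : Filter ℕ :=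
  atTop ⊓ 𝓟 {N | (N : Fin k) = i}

lemma residueFilter_le_atTop (i : Fin k) : residueFilter k i ≤ atTop := inf_le_left

lemma eventually_cast_eq_residueFilter (i : Fin k) :
    ∀ᶠ N in residueFilter k i, ((N : ℕ) : Fin k) = i :=
  mem_inf_of_right (mem_principal_self _)

lemma tendsto_mul_add_residueFilter (i : Fin k) :
    Tendsto (fun n => k * n + i) atTop (residueFilter k i) := by
  refine tendsto_inf.2 ⟨tendsto_atTop_mono (fun n => ?_) tendsto_id, tendsto_principal.2 ?_⟩
  · exact le_add_right (Nat.le_mul_of_pos_left n (Nat.pos_of_neZero k))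
  · refine Eventually.of_forall fun n => Fin.ext ?_
    rw [Fin.val_natCast, Nat.mul_add_mod, Nat.mod_eq_of_lt i.isLt]

instance (i : Fin k) : (residueFilter k i).NeBot := (tendsto_mul_add_residueFilter i).neBot

lemma tendsto_add_one_residueFilter (i : Fin k) :
    Tendsto (· + 1) (residueFilter k i) (residueFilter k (i + 1)) := by
  refine tendsto_inf.2 ⟨(tendsto_add_atTop_nat 1).mono_left (residueFilter_le_atTop i), ?_⟩
  refine tendsto_principal.2 ((eventually_cast_eq_residueFilter i).mono fun N hN => ?_)
  simp [← hN]

lemma tendsto_sub_residueFilter (i : Fin k) (t : ℕ) :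
    Tendsto (· - t) (residueFilter k i) (residueFilter k (i - t)) := by
  refine tendsto_inf.2 ⟨(tendsto_sub_atTop_nat t).mono_left (residueFilter_le_atTop i),
    tendsto_principal.2 ?_⟩
  filter_upwards [eventually_cast_eq_residueFilter i,
    residueFilter_le_atTop i (eventually_ge_atTop t)] with N hN hNt
  simp only [← hN]
  open Fin.CommRing in push_cast [hNt]; rfl

lemma tendsto_residueFilter_of_tendsto_mul_add {α : Type*} {u : ℕ → α} {l : Filter α}
    {i : Fin k} (h : Tendsto (fun n => u (k * n + i)) atTop l) :
    Tendsto u (residueFilter k i) l := by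
  refine (h.comp ((Nat.tendsto_div_const_atTop (NeZero.ne k)).mono_left
    (residueFilter_le_atTop i))).congr' ?_
  filter_upwards [eventually_cast_eq_residueFilter i] with N hN
  rw [Function.comp_apply, ← hN, Fin.val_natCast, Nat.div_add_mod]

end ResidueFilter

section Sequences

lemma le_one_of_tendsto_div {g : ℕ → ℝ} (hpos : ∀ n, 0 < g n) (hle : ∀ n, g n ≤ 1) {ρ : ℝ}
    (h : Tendsto (fun n => g (n + 1) / g n) atTop (𝓝 ρ)) : ρ ≤ 1 := by
  by_contra! hρ
  -- damping by a geometric factor `s < 1` keeps the series summable but the ratio above `1`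
  set s := 2 / (1 + ρ)
  have hs0 : 0 < s := by positivity
  have hs1 : s < 1 := by rw [div_lt_one (by linarith)]; linarith
  refine not_summable_of_ratio_test_tendsto_gt_one (f := fun n => g n * s ^ n) (l := ρ * s)
    ?_ ?_ ?_
  · rw [mul_div_assoc', lt_div_iff₀ (by linarith)]; linarith
  · refine (h.mul_const s).congr fun n => ?_
    rw [Real.norm_of_nonneg (by positivity [hpos (n + 1)]),
      Real.norm_of_nonneg (by positivity [hpos n]), pow_succ]
    field_simp [(hpos n).ne']
  · exact Summable.of_nonneg_of_le (fun n => (mul_pos (hpos n) (pow_pos hs0 n)).le)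
      (fun n => mul_le_of_le_one_left (pow_nonneg hs0.le n) (hle n))
      (summable_geometric_of_lt_one hs0.le hs1)

variable {k : ℕ} [NeZero k]

lemma Fin.eq_apply_zero_of_apply_add_one_le {f : Fin k → ℝ}
    (h : ∀ i, f (i + 1) ≤ f i) (i : Fin k) : f i = f 0 := by
  have hmono (a b : ℕ) : f ((a + b : ℕ) : Fin k) ≤ f a := by
    induction b with
    | zero => simp
    | succ b ih =>
      have hcast : ((a + (b + 1) : ℕ) : Fin k) = ((a + b : ℕ) : Fin k) + 1 := by
        open Fin.CommRing in rw [← add_assoc, Nat.cast_succ]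
      exact hcast ▸ (h _).trans ih
  apply le_antisymm
  · simpa using hmono 0 i
  · simpa [Nat.add_sub_cancel' i.isLt.le] using hmono i (k - i)

lemma tsum_eq_sum_tsum_add_mul {f : ℕ → ℝ} (hf : Summable f) :
    ∑' t, f t = ∑ r : Fin k, ∑' s, f (r + k * s) := by
  have hprod : HasSum (fun p : Fin k × ℕ => f (p.1 + k * p.2)) (∑' t, f t) := by
    convert ((Equiv.prodComm _ _).trans (Nat.divModEquiv k).symm).hasSum_iff.2 hf.hasSum
      using 2 with p
    simp [add_comm, mul_comm]
  have hinj (r : ℕ) : Function.Injective fun s : ℕ => r + k * s := fun a b hab =>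
    Nat.eq_of_mul_eq_mul_left (Nat.pos_of_neZero k) (Nat.add_left_cancel hab)
  exact (hprod.prod_fiberwise fun r => (hf.comp_injective (hinj r)).hasSum).unique
    (hasSum_fintype _)

end Sequences

section SeriesOfAmat

lemma integral_mul_pow (μ : Measure ℝ) (z : ℝ) (t : ℕ) :
    ∫ x, (z * x) ^ t ∂μ = z ^ t * ∫ x, x ^ t ∂μ := by
  simp_rw [mul_pow]
  exact integral_const_mul _ _

variable {k : ℕ} [NeZero k]

lemma integral_div_one_sub_pow_eq_tsum {ν : Measure ℝ} [IsFiniteMeasure ν] {c z : ℝ}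
    (hν : ∀ᵐ x ∂ν, x ∈ Set.Icc 0 c) (hz : 0 < z) (u : ℕ)
    (hsum : Summable fun s : ℕ => ∫ x, (z * x) ^ (u + k * s) ∂ν) :
    ∫ x, (z * x) ^ u / (1 - (z * x) ^ k) ∂ν = ∑' s : ℕ, ∫ x, (z * x) ^ (u + k * s) ∂ν := by
  have hint (n : ℕ) : Integrable (fun x => (z * x) ^ n) ν :=
    ((integrable_pow_of_ae_mem_Icc hν n).const_mul (z ^ n)).congr
      (Eventually.of_forall fun x => (mul_pow z x n).symm)
  have hnonneg (n : ℕ) : ∀ᵐ x ∂ν, 0 ≤ (z * x) ^ n :=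
    hν.mono fun x hx => pow_nonneg (mul_nonneg hz.le hx.1) n
  -- every term of the series dominates the mass of `{z x ≥ 1}`, which must therefore vanish
  have hlt : ∀ᵐ x ∂ν, z * x < 1 := by
    have hmass (s : ℕ) : ν.real (Set.Ici z⁻¹) ≤ ∫ x, (z * x) ^ (u + k * s) ∂ν := by
      have := mul_measureReal_Ici_le_integral_pow (hν.mono fun _ hx => hx.1)
        (integrable_pow_of_ae_mem_Icc hν (u + k * s)) (inv_nonneg.2 hz.le)
      rw [inv_pow, ← div_eq_inv_mul, div_le_iff₀' (by positivity)] at this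
      rwa [integral_mul_pow]
    have hzero : ν (Set.Ici z⁻¹) = 0 := (measureReal_eq_zero_iff).1 <|
      le_antisymm (ge_of_tendsto hsum.tendsto_atTop_zero (Eventually.of_forall hmass))
        measureReal_nonneg
    filter_upwards [measure_eq_zero_iff_ae_notMem.1 hzero] with x hx
    rw [Set.mem_Ici, not_le, ← mul_lt_mul_iff_right₀ hz, mul_inv_cancel₀ hz.ne'] at hx
    exact hx
  rw [integral_tsum_of_summable_integral_norm (fun s => hint _) (hsum.congr fun s =>
    integral_congr_ae ((hnonneg _).mono fun _ hx => (Real.norm_of_nonneg hx).symm))]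
  refine integral_congr_ae ?_
  filter_upwards [hlt, hν] with x hx hx'
  have hzx : 0 ≤ z * x := mul_nonneg hz.le hx'.1
  simp_rw [pow_add, pow_mul]
  rw [tsum_mul_left, tsum_geometric_of_lt_one (pow_nonneg hzx k)
    (pow_lt_one₀ hzx hx (NeZero.ne k)), div_eq_mul_inv]

/-- The limiting weight of the mutants born `t` generations before a generation of residue `i`,
normalised by `V`. -/
def weightedMoment (β : Fin k → ℝ) (q : Fin k → Measure ℝ) (z : ℝ) (V : Fin k → ℝ) (i : Fin k)
    (t : ℕ) : ℝ :=
  V (i - t) * (β (i - t) * ∫ x, (z * x) ^ t ∂q (i - t))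

lemma mulVec_Amat_apply {β : Fin k → ℝ} {q : Fin k → Measure ℝ} [∀ j, IsFiniteMeasure (q j)]
    {c z : ℝ} {V : Fin k → ℝ} (hq : ∀ j, ∀ᵐ x ∂q j, x ∈ Set.Icc 0 c) (hβ : ∀ j, 0 < β j)
    (hz : 0 < z) (hV : ∀ j, 0 < V j) (i : Fin k) (hsum : Summable (weightedMoment β q z V i)) :
    (Amat k β q z *ᵥ V) i = ∑' t, weightedMoment β q z V i t := by
  rw [tsum_eq_sum_tsum_add_mul (k := k) hsum, mulVec, dotProduct]
  refine Fintype.sum_equiv (Equiv.subLeft i) _ _ fun j => ?_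
  have hidx (s : ℕ) : i - ((((i - j : Fin k) : ℕ) + k * s : ℕ) : Fin k) = j := by
    open Fin.CommRing in simp
  have hinj : Function.Injective fun s : ℕ => ((i - j : Fin k) : ℕ) + k * s := fun a b h => by
    simpa [NeZero.ne k] using h
  have hsum' : Summable fun s : ℕ => ∫ x, (z * x) ^ (((i - j : Fin k) : ℕ) + k * s) ∂q j := by
    refine (summable_mul_left_iff (mul_pos (hV j) (hβ j)).ne').1 ?_
    exact (hsum.comp_injective hinj).congr fun s => by
      simp only [Function.comp_apply, weightedMoment, hidx, mul_assoc]
  simp only [Equiv.subLeft_apply, weightedMoment, hidx]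
  rw [tsum_mul_left, tsum_mul_left, ← integral_div_one_sub_pow_eq_tsum (hq j) hz _ hsum', Amat,
    of_apply, integral_mul_const]
  ring

lemma mul_apply_add_one_eq_of_eq_prod_Ico {zf V : Fin k → ℝ} {zbar : ℝ}
    (hzbar : zbar ≠ 0) (hk : zbar ^ k = ∏ i, zf i)
    (hV : ∀ i : Fin k,
      V i = (∏ ℓ ∈ Finset.Ico (i : ℕ) k, zf ((ℓ : ℕ) : Fin k)) / zbar ^ (k - (i : ℕ)))
    (m : Fin k) : zf m * V (m + 1) = zbar * V m := by
  obtain ⟨n, rfl⟩ := Nat.exists_eq_add_one_of_ne_zero (NeZero.ne k)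
  rw [hV m, hV (m + 1)]
  rcases eq_or_ne m (Fin.last n) with rfl | hm
  · rw [Fin.last_add_one, Fin.val_zero, ← Finset.range_eq_Ico, ← Fin.prod_univ_eq_prod_range,
      Fin.val_last, Nat.Ico_succ_singleton]
    simp [← hk, hzbar, mul_div_cancel₀ _ hzbar]
  · rw [Fin.val_add_one_of_lt (Fin.lt_last_iff_ne_last.2 hm),
      Finset.prod_eq_prod_Ico_succ_bot m.isLt,
      show n + 1 - m = n + 1 - (m + 1) + 1 by omega, pow_succ]
    simp only [Fin.cast_val_eq_self]
    field_simp

end SeriesOfAmat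

structure KingmanModel (k : ℕ) [NeZero k] where
  β : Fin k → ℝ
  q : Fin k → Measure ℝ
  p : ℕ → Measure ℝ
  w : ℕ → ℝ
  η : ℝ
  β_mem : ∀ i, β i ∈ Set.Ioo (0 : ℝ) 1
  isProbabilityMeasure_q : ∀ i, IsProbabilityMeasure (q i)
  isProbabilityMeasure_p_zero : IsProbabilityMeasure (p 0)
  ae_mem_q : ∀ i, ∀ᵐ x ∂q i, x ∈ Set.Icc 0 η
  ae_mem_p_zero : ∀ᵐ x ∂p 0, x ∈ Set.Icc 0 η
  integral_q_pos : ∀ i, 0 < ∫ x, x ∂q i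
  integral_p_zero_pos : 0 < ∫ x, x ∂p 0
  kingmanRec : KingmanRec k β q p w

namespace KingmanModel

attribute [instance] isProbabilityMeasure_q

variable {k : ℕ} [NeZero k]

def ofEtaSup {β : Fin k → ℝ} {q : Fin k → Measure ℝ} [∀ i, IsProbabilityMeasure (q i)]
    {p : ℕ → Measure ℝ} [IsProbabilityMeasure (p 0)] {w : ℕ → ℝ}
    (hβ : ∀ i, β i ∈ Set.Ioo (0 : ℝ) 1) (hq : ∀ i, ∀ᵐ x ∂q i, x ∈ Set.Icc (0 : ℝ) 1)
    (hp : ∀ᵐ x ∂p 0, x ∈ Set.Icc (0 : ℝ) 1)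
    (hη : ∀ i, 0 < etaSup (q i) ∧ etaSup (q i) ≤ etaSup (p 0))
    (hrec : KingmanRec k β q p w) : KingmanModel k where
  β := β
  q := q
  p := p
  w := w
  η := etaSup (p 0)
  β_mem := hβ
  isProbabilityMeasure_q := inferInstance
  isProbabilityMeasure_p_zero := inferInstance
  ae_mem_q i := (ae_mem_Icc_etaSup (hq i)).mono fun _ hx => ⟨hx.1, hx.2.trans (hη i).2⟩
  ae_mem_p_zero := ae_mem_Icc_etaSup hp
  integral_q_pos i := integral_pos_of_etaSup_pos (hq i) (hη i).1
  integral_p_zero_pos := integral_pos_of_etaSup_pos hp ((hη 0).1.trans_le (hη 0).2)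
  kingmanRec := hrec

variable (M : KingmanModel k)

lemma p_succ (n : ℕ) :
    M.p (n + 1) = kingmanStep (M.β (n + 1 : ℕ)) (M.q (n + 1 : ℕ)) (M.p n) (M.w n) :=
  M.kingmanRec.2 n

lemma ae_mem_p (n : ℕ) : ∀ᵐ x ∂M.p n, x ∈ Set.Icc 0 M.η := by
  induction n with
  | zero => exact M.ae_mem_p_zero
  | succ n ih => rw [p_succ]; exact ae_kingmanStep (M.ae_mem_q _) ih

instance isFiniteMeasure_p (n : ℕ) : IsFiniteMeasure (M.p n) := by
  induction n with
  | zero => have := M.isProbabilityMeasure_p_zero; infer_instance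
  | succ n ih => rw [p_succ]; exact isFiniteMeasure_kingmanStep (M.ae_mem_p n)

lemma w_nonneg (n : ℕ) : 0 ≤ M.w n := by
  rw [M.kingmanRec.1 n]
  exact integral_nonneg_of_ae ((M.ae_mem_p n).mono fun _ hx => hx.1)

/-- The factor by which the moments of `p N` enter those of `p (N + 1)`; along `N ≡ i (mod k)`
it tends to the paper's `z_i`. -/
def zeta (N : ℕ) : ℝ := (1 - M.β (N + 1 : ℕ)) / M.w N

lemma integral_pow_p_succ (n T : ℕ) :
    ∫ x, x ^ T ∂M.p (n + 1) =
      M.β (n + 1 : ℕ) * ∫ x, x ^ T ∂M.q (n + 1 : ℕ) + M.zeta n * ∫ x, x ^ (T + 1) ∂M.p n := by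
  rw [p_succ]
  exact integral_pow_kingmanStep (M.ae_mem_q _) (M.ae_mem_p n) (M.β_mem _).1.le
    (M.β_mem _).2.le (M.w_nonneg n) T

lemma mul_integral_q_le_w (n : ℕ) :
    M.β (n + 1 : ℕ) * ∫ x, x ∂M.q (n + 1 : ℕ) ≤ M.w (n + 1) := by
  have hζ : 0 ≤ M.zeta n :=
    div_nonneg (sub_nonneg.2 (M.β_mem _).2.le) (M.w_nonneg n)
  have := M.integral_pow_p_succ n 1
  simp only [pow_one] at this
  rw [M.kingmanRec.1, this, le_add_iff_nonneg_right]
  exact mul_nonneg hζ (integral_pow_nonneg ((M.ae_mem_p n).mono fun _ hx => hx.1) 2)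

lemma w_pos (n : ℕ) : 0 < M.w n := by
  cases n with
  | zero => rw [M.kingmanRec.1]; exact M.integral_p_zero_pos
  | succ n => exact (mul_pos (M.β_mem _).1 (M.integral_q_pos _)).trans_le (M.mul_integral_q_le_w n)

lemma zeta_pos (N : ℕ) : 0 < M.zeta N :=
  div_pos (sub_pos.2 (M.β_mem _).2) (M.w_pos N)

instance isProbabilityMeasure_p (n : ℕ) : IsProbabilityMeasure (M.p n) := by
  induction n with
  | zero => exact M.isProbabilityMeasure_p_zero
  | succ n ih =>
    rw [p_succ]
    exact isProbabilityMeasure_kingmanStep (M.ae_mem_q _) (M.ae_mem_p n) (M.β_mem _).1.le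
      (M.β_mem _).2.le (M.kingmanRec.1 n) (M.w_pos n)

def zetaProd (N t : ℕ) : ℝ := ∏ r ∈ Finset.Ico (N - t) N, M.zeta r

def mutantTerm (N t : ℕ) : ℝ :=
  M.zetaProd N t * (M.β (N - t : ℕ) * ∫ x, x ^ t ∂M.q (N - t : ℕ))

def residualTerm (N T : ℕ) : ℝ := M.zetaProd N T * ∫ x, x ^ T ∂M.p (N - T)

lemma zetaProd_pos (N t : ℕ) : 0 < M.zetaProd N t :=
  Finset.prod_pos fun r _ => M.zeta_pos r

lemma zetaProd_succ {N t : ℕ} (h : t < N) :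
    M.zetaProd N (t + 1) = M.zeta (N - (t + 1)) * M.zetaProd N t := by
  rw [zetaProd, Finset.prod_eq_prod_Ico_succ_bot (by omega), zetaProd,
    show N - (t + 1) + 1 = N - t by omega]

lemma mutantTerm_nonneg (N t : ℕ) : 0 ≤ M.mutantTerm N t :=
  mul_nonneg (M.zetaProd_pos N t).le (mul_nonneg (M.β_mem _).1.le
    (integral_pow_nonneg ((M.ae_mem_q _).mono fun _ hx => hx.1) t))

lemma residualTerm_eq_mutantTerm_add {N T : ℕ} (h : T < N) :
    M.residualTerm N T = M.mutantTerm N T + M.residualTerm N (T + 1) := by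
  have hstep := M.integral_pow_p_succ (N - (T + 1)) T
  rw [show N - (T + 1) + 1 = N - T by omega] at hstep
  rw [residualTerm, residualTerm, mutantTerm, M.zetaProd_succ h, hstep]
  ring

lemma sum_mutantTerm_add_residualTerm {N T : ℕ} (h : T ≤ N) :
    ∑ t ∈ Finset.range T, M.mutantTerm N t + M.residualTerm N T = 1 := by
  induction T with
  | zero => simp [residualTerm, zetaProd]
  | succ T ih =>
    rw [Finset.sum_range_succ, add_assoc, ← M.residualTerm_eq_mutantTerm_add h, ih (by omega)]

lemma residualTerm_nonneg (N T : ℕ) : 0 ≤ M.residualTerm N T :=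
  mul_nonneg (M.zetaProd_pos N T).le
    (integral_pow_nonneg ((M.ae_mem_p _).mono fun _ hx => hx.1) T)

lemma residualTerm_le_one {N T : ℕ} (h : T ≤ N) : M.residualTerm N T ≤ 1 := by
  rw [← M.sum_mutantTerm_add_residualTerm h, le_add_iff_nonneg_left]
  exact Finset.sum_nonneg fun t _ => M.mutantTerm_nonneg N t

lemma residualTerm_succ_le {N T : ℕ} (h : T ≤ N) :
    M.residualTerm (N + 1) (T + 1) ≤ M.zeta N * (M.η * M.residualTerm N T) := by
  rw [residualTerm, residualTerm, zetaProd, zetaProd, show N + 1 - (T + 1) = N - T by omega,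
    Finset.prod_Ico_succ_top (by omega)]
  calc (∏ r ∈ Finset.Ico (N - T) N, M.zeta r) * M.zeta N * ∫ x, x ^ (T + 1) ∂M.p (N - T)
      ≤ (∏ r ∈ Finset.Ico (N - T) N, M.zeta r) * M.zeta N * (M.η * ∫ x, x ^ T ∂M.p (N - T)) :=
        mul_le_mul_of_nonneg_left (integral_pow_succ_le (M.ae_mem_p _) T)
          (mul_nonneg (M.zetaProd_pos N T).le (M.zeta_pos N).le)
    _ = _ := by ring

lemma wbar_pos {i : Fin k} {wbar : ℝ}
    (hconv : Tendsto (fun n => M.w (k * n + i)) atTop (𝓝 wbar)) : 0 < wbar := by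
  refine (mul_pos (M.β_mem i).1 (M.integral_q_pos i)).trans_le
    (ge_of_tendsto (tendsto_residueFilter_of_tendsto_mul_add hconv) ?_)
  filter_upwards [eventually_cast_eq_residueFilter i,
    residueFilter_le_atTop i (eventually_ge_atTop 1)] with N hN hN1
  obtain ⟨n, rfl⟩ : ∃ n, N = n + 1 := ⟨N - 1, by omega⟩
  rw [← hN]
  exact M.mul_integral_q_le_w n

lemma tendsto_zeta {i : Fin k} {wbar : ℝ}
    (hconv : Tendsto (fun n => M.w (k * n + i)) atTop (𝓝 wbar)) :
    Tendsto M.zeta (residueFilter k i) (𝓝 ((1 - M.β (i + 1)) / wbar)) := by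
  refine (tendsto_const_nhds.div (tendsto_residueFilter_of_tendsto_mul_add hconv)
    (M.wbar_pos hconv).ne').congr' ?_
  filter_upwards [eventually_cast_eq_residueFilter i] with N hN
  simp [zeta, ← hN]

/-- The paper's `z_i`, `z̄` and `V`, axiomatised by the properties the limit argument needs. -/
structure LimitData where
  z : Fin k → ℝ
  zbar : ℝ
  V : Fin k → ℝ
  tendsto_zeta : ∀ i, Tendsto M.zeta (residueFilter k i) (𝓝 (z i))
  mul_V_add_one : ∀ i, z i * V (i + 1) = zbar * V i
  V_pos : ∀ i, 0 < V i
  zbar_pos : 0 < zbar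

namespace LimitData

variable {M} (L : M.LimitData)

lemma tendsto_zetaProd (i : Fin k) (t : ℕ) :
    Tendsto (M.zetaProd · t) (residueFilter k i) (𝓝 (L.zbar ^ t * L.V (i - t) / L.V i)) := by
  induction t with
  | zero => simp [zetaProd, div_self (L.V_pos i).ne']
  | succ t ih =>
    have hshift : i - ((t + 1 : ℕ) : Fin k) + 1 = i - t := by
      open Fin.CommRing in push_cast; ring
    have hlim := ((L.tendsto_zeta _).comp (tendsto_sub_residueFilter i (t + 1))).mul ih
    rw [← hshift, ← mul_div_assoc, mul_left_comm, L.mul_V_add_one, ← mul_assoc,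
      ← pow_succ] at hlim
    refine hlim.congr' ?_
    filter_upwards [residueFilter_le_atTop i (eventually_gt_atTop t)] with N hN
    exact (M.zetaProd_succ hN).symm

lemma tendsto_mutantTerm (i : Fin k) (t : ℕ) :
    Tendsto (M.mutantTerm · t) (residueFilter k i)
      (𝓝 (weightedMoment M.β M.q L.zbar L.V i t / L.V i)) := by
  have hlim := (L.tendsto_zetaProd i t).mul_const (M.β (i - t) * ∫ x, x ^ t ∂M.q (i - t))
  have hval : L.zbar ^ t * L.V (i - t) / L.V i *
      (M.β (i - t) * ∫ x, x ^ t ∂M.q (i - (t : Fin k))) =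
      weightedMoment M.β M.q L.zbar L.V i t / L.V i := by
    rw [weightedMoment, integral_mul_pow]; ring
  refine (hval ▸ hlim).congr' ?_
  filter_upwards
    [tendsto_sub_residueFilter i t (eventually_cast_eq_residueFilter (i - (t : Fin k)))] with N hN
  rw [mutantTerm, hN]

lemma tendsto_residualTerm (i : Fin k) (T : ℕ) :
    Tendsto (M.residualTerm · T) (residueFilter k i)
      (𝓝 ((L.V i - ∑ t ∈ Finset.range T, weightedMoment M.β M.q L.zbar L.V i t) / L.V i)) := by
  have hlim := tendsto_const_nhds (x := (1 : ℝ)).sub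
    (tendsto_finsetSum (Finset.range T) fun t _ => L.tendsto_mutantTerm i t)
  rw [← Finset.sum_div, ← div_self (L.V_pos i).ne', ← sub_div, div_self (L.V_pos i).ne'] at hlim
  refine hlim.congr' ?_
  filter_upwards [residueFilter_le_atTop i (eventually_ge_atTop T)] with N hN
  rw [← M.sum_mutantTerm_add_residualTerm hN, add_sub_cancel_left]

lemma weightedMoment_nonneg (i : Fin k) (t : ℕ) : 0 ≤ weightedMoment M.β M.q L.zbar L.V i t :=
  mul_nonneg (L.V_pos _).le <| mul_nonneg (M.β_mem _).1.le <| integral_nonneg_of_ae <|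
    (M.ae_mem_q _).mono fun _ hx => pow_nonneg (mul_nonneg L.zbar_pos.le hx.1) t

lemma sum_weightedMoment_le (i : Fin k) (T : ℕ) :
    ∑ t ∈ Finset.range T, weightedMoment M.β M.q L.zbar L.V i t ≤ L.V i := by
  have := ge_of_tendsto (L.tendsto_residualTerm i T)
    (Eventually.of_forall fun N => M.residualTerm_nonneg N T)
  rwa [le_div_iff₀ (L.V_pos i), zero_mul, sub_nonneg] at this

lemma summable_weightedMoment (i : Fin k) : Summable (weightedMoment M.β M.q L.zbar L.V i) :=
  summable_of_sum_range_le (L.weightedMoment_nonneg i) (L.sum_weightedMoment_le i)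

/-- The limit of the residual terms, scaled by `V i`; it is the paper's `α` once shown not to
depend on `i`. -/
def defect (i : Fin k) : ℝ := L.V i - ∑' t, weightedMoment M.β M.q L.zbar L.V i t

lemma defect_nonneg (i : Fin k) : 0 ≤ L.defect i :=
  sub_nonneg.2 <| Real.tsum_le_of_sum_range_le (L.weightedMoment_nonneg i)
    (L.sum_weightedMoment_le i)

lemma defect_add_one_le (i : Fin k) : L.defect (i + 1) ≤ L.zbar * M.η * L.defect i := by
  set S := fun j T => ∑ t ∈ Finset.range T, weightedMoment M.β M.q L.zbar L.V j t
  have hT (T : ℕ) : L.V (i + 1) - S (i + 1) (T + 1) ≤ L.zbar * M.η * (L.V i - S i T) := by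
    have hle := le_of_tendsto_of_tendsto
      ((L.tendsto_residualTerm (i + 1) (T + 1)).comp (tendsto_add_one_residueFilter i))
      ((L.tendsto_zeta i).mul (tendsto_const_nhds.mul (L.tendsto_residualTerm i T)))
      (by filter_upwards [residueFilter_le_atTop i (eventually_ge_atTop T)] with N hN
          using M.residualTerm_succ_le hN)
    rw [div_le_iff₀ (L.V_pos _)] at hle
    calc L.V (i + 1) - S (i + 1) (T + 1)
        ≤ L.z i * (M.η * ((L.V i - S i T) / L.V i)) * L.V (i + 1) := hle
      _ = L.zbar * M.η * (L.V i - S i T) := by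
        rw [show L.z i * (M.η * ((L.V i - S i T) / L.V i)) * L.V (i + 1) =
          L.z i * L.V (i + 1) * M.η * (L.V i - S i T) / L.V i by ring, L.mul_V_add_one i]
        field_simp [(L.V_pos i).ne']
  have hsum (j : Fin k) := (L.summable_weightedMoment j).hasSum.tendsto_sum_nat
  exact le_of_tendsto_of_tendsto'
    (tendsto_const_nhds.sub ((hsum (i + 1)).comp (tendsto_add_atTop_nat 1)))
    (tendsto_const_nhds.mul (tendsto_const_nhds.sub (hsum i))) hT

lemma zbar_mul_le_one {c : ℝ} (hc : 0 < c) (hm : 0 < (M.p 0).real (Set.Ici c)) :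
    L.zbar * c ≤ 1 := by
  set g : ℕ → ℝ := fun n => M.zetaProd (k * n) (k * n) * (c ^ (k * n) * (M.p 0).real (Set.Ici c))
  have hgpos (n : ℕ) : 0 < g n := mul_pos (M.zetaProd_pos _ _) (by positivity)
  have hgle (n : ℕ) : g n ≤ 1 := by
    refine le_trans ?_ (M.residualTerm_le_one (le_refl (k * n)))
    rw [residualTerm, Nat.sub_self]
    exact mul_le_mul_of_nonneg_left (mul_measureReal_Ici_le_integral_pow
      ((M.ae_mem_p 0).mono fun _ hx => hx.1) (integrable_pow_of_ae_mem_Icc (M.ae_mem_p 0) _)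
      hc.le) (M.zetaProd_pos _ _).le
  have hratio (n : ℕ) : g (n + 1) / g n = M.zetaProd (k * n + k) k * c ^ k := by
    have hprod : M.zetaProd (k * n + k) (k * n + k) =
        M.zetaProd (k * n) (k * n) * M.zetaProd (k * n + k) k := by
      simp only [zetaProd, Nat.sub_self, Nat.add_sub_cancel]
      exact (Finset.prod_Ico_consecutive _ (Nat.zero_le _) (Nat.le_add_right _ _)).symm
    simp only [g, mul_add, mul_one, pow_add, hprod]
    field_simp [(M.zetaProd_pos (k * n) (k * n)).ne']
  have hblock : Tendsto (fun n => k * n + k) atTop (residueFilter k 0) :=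
    ((tendsto_mul_add_residueFilter (0 : Fin k)).comp (tendsto_add_atTop_nat 1)).congr
      fun n => by simp [mul_add]
  have hlim := ((L.tendsto_zetaProd 0 k).comp hblock).mul_const (c ^ k)
  rw [Fin.natCast_self, sub_zero, mul_div_cancel_right₀ _ (L.V_pos 0).ne', ← mul_pow] at hlim
  exact (pow_le_one_iff_of_nonneg (by positivity [L.zbar_pos]) (NeZero.ne k)).1
    (le_one_of_tendsto_div hgpos hgle (hlim.congr fun n => (hratio n).symm))

lemma zbar_mul_eta_le_one (hη : ∀ c, 0 < c → c < M.η → 0 < (M.p 0).real (Set.Ici c)) :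
    L.zbar * M.η ≤ 1 := by
  rw [← le_div_iff₀' L.zbar_pos]
  refine le_of_forall_lt_imp_le_of_dense fun c hc => ?_
  rcases le_or_gt c 0 with hc0 | hc0
  · exact hc0.trans (by positivity [L.zbar_pos])
  · rw [le_div_iff₀' L.zbar_pos]
    exact L.zbar_mul_le_one hc0 (hη c hc0 hc)

lemma defect_eq_defect_zero (hθ : L.zbar * M.η ≤ 1) (i : Fin k) : L.defect i = L.defect 0 :=
  Fin.eq_apply_zero_of_apply_add_one_le (fun j => (L.defect_add_one_le j).trans
    (mul_le_of_le_one_left (L.defect_nonneg j) hθ)) i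

lemma defect_eq_zero (hθ : L.zbar * M.η < 1) : L.defect 0 = 0 := by
  have hle := L.defect_add_one_le 0
  rw [L.defect_eq_defect_zero hθ.le] at hle
  nlinarith [L.defect_nonneg 0]

lemma mulVec_Amat_add_defect (i : Fin k) :
    (Amat k M.β M.q L.zbar *ᵥ L.V) i + L.defect i = L.V i := by
  rw [mulVec_Amat_apply M.ae_mem_q (fun j => (M.β_mem j).1) L.zbar_pos L.V_pos i
    (L.summable_weightedMoment i), defect, add_sub_cancel]

end LimitData

end KingmanModel

end Kingman

open Kingman in
/-- Let `V` be the vector with `v_i = z_{k−1} z_{k−2} ⋯ z_i / z̄^{k−i}` (so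
`v₀ = 1`). Then there exists `α ≥ 0` such that `A(z̄) V + α·𝟏 = V`; furthermore if
`z̄ < 1/η₀` then `α = 0`. -/
theorem stmt_12 (k : ℕ) [NeZero k] (β : Fin k → ℝ) (q : Fin k → Measure ℝ)
    [∀ i, IsProbabilityMeasure (q i)]
    (p₀ : Measure ℝ) [IsProbabilityMeasure p₀]
    (hβ : ∀ i, β i ∈ Set.Ioo (0:ℝ) 1)
    (hq : ∀ i, q i (Set.Icc (0:ℝ) 1)ᶜ = 0) (hp₀ : p₀ (Set.Icc (0:ℝ) 1)ᶜ = 0)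
    (hη : ∀ i, 0 < etaSup (q i) ∧ etaSup (q i) ≤ etaSup p₀)
    (p : ℕ → Measure ℝ) (w : ℕ → ℝ)
    (hp0 : p 0 = p₀) (hrec : KingmanRec k β q p w)
    (wbar : Fin k → ℝ)
    (hconv : ∀ i : Fin k, Tendsto (fun n => w (k * n + (i : ℕ))) atTop (nhds (wbar i)))
    (zf : Fin k → ℝ) (hzf : ∀ i : Fin k, zf i = (1 - β (i + 1)) / wbar i)
    (zbar : ℝ) (hzbar : zbar = (∏ i, zf i) ^ ((1 : ℝ) / k))
    (V : Fin k → ℝ)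
    (hV : ∀ i : Fin k,
      V i = (∏ ℓ ∈ Finset.Ico (i : ℕ) k, zf ((ℓ : ℕ) : Fin k)) / zbar ^ (k - (i : ℕ))) :
    ∃ α : ℝ, 0 ≤ α ∧ (∀ i, (Amat k β q zbar).mulVec V i + α = V i) ∧
      (zbar < 1 / etaSup p₀ → α = 0) := by
  subst hp0
  let M := KingmanModel.ofEtaSup hβ (fun i => mem_ae_iff.2 (hq i)) (mem_ae_iff.2 hp₀) hη hrec
  have hzf_pos (i : Fin k) : 0 < zf i :=
    hzf i ▸ div_pos (sub_pos.2 (hβ _).2) (M.wbar_pos (hconv i))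
  have hprod_pos : 0 < ∏ i, zf i := Finset.prod_pos fun i _ => hzf_pos i
  have hzbar_pos : 0 < zbar := hzbar ▸ Real.rpow_pos_of_pos hprod_pos _
  have hzbar_pow : zbar ^ k = ∏ i, zf i := by
    rw [hzbar, one_div, Real.rpow_inv_natCast_pow hprod_pos.le (NeZero.ne k)]
  let L : M.LimitData :=
    { z := zf, zbar, V
      tendsto_zeta i := hzf i ▸ M.tendsto_zeta (hconv i)
      mul_V_add_one := mul_apply_add_one_eq_of_eq_prod_Ico hzbar_pos.ne' hzbar_pow hV
      V_pos i := hV i ▸ div_pos (Finset.prod_pos fun _ _ => hzf_pos _) (pow_pos hzbar_pos _)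
      zbar_pos := hzbar_pos }
  have hθ : zbar * M.η ≤ 1 :=
    L.zbar_mul_eta_le_one fun c hc0 hc => measureReal_Ici_pos_of_lt_etaSup hc0.le hc
  have hη₀ : 0 < etaSup (p 0) := (hη 0).1.trans_le (hη 0).2
  refine ⟨L.defect 0, L.defect_nonneg 0, fun i => ?_,
    fun hlt => L.defect_eq_zero ((lt_div_iff₀ hη₀).1 hlt)⟩
  rw [← L.defect_eq_defect_zero hθ i]
  exact L.mulVec_Amat_add_defect i
end
end
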